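/- arXiv:1605.08709 — 6 statements merged into one kernel-verified Lean document; each statement's English description precedes it below -/
import Mathlib

section
/- Let n ≥ 3, let ρ : Ω → ℝ be a smooth function on an open set Ω ⊂ ℂ², let a : Ω → ℝ be smooth and nowhere vanishing, and set ρ* := a·ρ. Then at every point p ∈ Ω with ρ(p) = 0 one has det A_n(ρ*)(p) = a(p)^{(2n−1)²} · det A_n(ρ)(p) and det D_n(ρ*)(p) = a(p)^{3n(n+1)/2} · det D_n(ρ)(p). -/
noncomputable section

open Complex Matrix Set

/-- Wirtinger derivative `∂/∂z` (first coordinate) of `f : ℂ × ℂ → ℂ`. -/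
def wdz (f : ℂ × ℂ → ℂ) (p : ℂ × ℂ) : ℂ :=
  (fderiv ℝ f p (1, 0) - Complex.I * fderiv ℝ f p (Complex.I, 0)) / 2

/-- Wirtinger derivative `∂/∂z̄` (first coordinate). -/
def wdzb (f : ℂ × ℂ → ℂ) (p : ℂ × ℂ) : ℂ :=
  (fderiv ℝ f p (1, 0) + Complex.I * fderiv ℝ f p (Complex.I, 0)) / 2

/-- Wirtinger derivative `∂/∂w` (second coordinate). -/
def wdw (f : ℂ × ℂ → ℂ) (p : ℂ × ℂ) : ℂ :=
  (fderiv ℝ f p (0, 1) - Complex.I * fderiv ℝ f p (0, Complex.I)) / 2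

/-- Wirtinger derivative `∂/∂w̄` (second coordinate). -/
def wdwb (f : ℂ × ℂ → ℂ) (p : ℂ × ℂ) : ℂ :=
  (fderiv ℝ f p (0, 1) + Complex.I * fderiv ℝ f p (0, Complex.I)) / 2

/-- The operator `L := -ρ_w ∂_z + ρ_z ∂_w` associated with `ρ`. -/
def Lop (ρ f : ℂ × ℂ → ℂ) : ℂ × ℂ → ℂ :=
  fun p => -(wdw ρ p) * wdz f p + wdz ρ p * wdw f p

/-- The operator `L̄ := -ρ_w̄ ∂_z̄ + ρ_z̄ ∂_w̄` associated with `ρ`. -/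
def Lbar (ρ f : ℂ × ℂ → ℂ) : ℂ × ℂ → ℂ :=
  fun p => -(wdwb ρ p) * wdzb f p + wdzb ρ p * wdwb f p

/-- The function `ρ_{Z²}(L,L) = ρ_zz ρ_w² - 2 ρ_zw ρ_z ρ_w + ρ_ww ρ_z²`. -/
def rhoZ2LL (ρ : ℂ × ℂ → ℂ) : ℂ × ℂ → ℂ :=
  fun p => wdz (wdz ρ) p * (wdw ρ p) ^ 2
    - 2 * wdw (wdz ρ) p * wdz ρ p * wdw ρ p
    + wdw (wdw ρ) p * (wdz ρ p) ^ 2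

/-- The row functions of the matrix `A_n(ρ)`: for `i ≤ n` the monomial `ρ_z^i ρ_w^{n-i}`,
and for `i = n + 1 + s` (with `0 ≤ s ≤ n - 3`) the function `ρ_z^s ρ_w^{n-3-s} ρ_{Z²}(L,L)`. -/
def rowA (ρ : ℂ × ℂ → ℂ) (n i : ℕ) : ℂ × ℂ → ℂ :=
  if i ≤ n then fun p => (wdz ρ p) ^ i * (wdw ρ p) ^ (n - i)
  else fun p => (wdz ρ p) ^ (i - (n + 1)) * (wdw ρ p) ^ (n - 3 - (i - (n + 1))) * rhoZ2LL ρ p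

/-- The `(2n-1) × (2n-1)` matrix `A_n(ρ)` at the point `p`; the `(i,j)` entry is
`L̄^j` applied to the `i`-th row function, evaluated at `p`. -/
def matA (ρ : ℂ × ℂ → ℂ) (n : ℕ) (p : ℂ × ℂ) :
    Matrix (Fin (2 * n - 1)) (Fin (2 * n - 1)) ℂ :=
  fun i j => (Lbar ρ)^[(j : ℕ)] (rowA ρ n (i : ℕ)) p

/-- The `(n+1) × (n+1)` matrix `D_n(ρ) = (L̄^j (ρ_z^k ρ_w^{n-k}))_{0 ≤ j,k ≤ n}` at `p`. -/
def matD (ρ : ℂ × ℂ → ℂ) (n : ℕ) (p : ℂ × ℂ) : Matrix (Fin (n + 1)) (Fin (n + 1)) ℂ :=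
  fun k j => (Lbar ρ)^[(j : ℕ)] (fun q => (wdz ρ q) ^ (k : ℕ) * (wdw ρ q) ^ (n - (k : ℕ))) p

/-- The determinant of the complex Jacobian matrix of a map `H : ℂ² → ℂ²`
(computed via Wirtinger derivatives of the two components). -/
def detJac (H : ℂ × ℂ → ℂ × ℂ) (p : ℂ × ℂ) : ℂ :=
  wdz (fun q => (H q).1) p * wdw (fun q => (H q).2) p
    - wdw (fun q => (H q).1) p * wdz (fun q => (H q).2) p

/-!
Write `ρ* = aρ`. Since `ρ*_z̄ = a ρ_z̄ + ρ a_z̄` and likewise for `w̄`, the operator `L̄_{ρ*}`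
equals `a L̄_ρ + ρ L̄_a`; in particular `L̄_{ρ*} ρ = ρ L̄_a ρ`, so `L̄_{ρ*}` preserves the ideal
generated by `ρ` in `C^∞(Ω)`. Modulo that ideal every row function of `A_n(ρ*)` and `D_n(ρ*)` is
`aⁿ` times the corresponding one for `ρ` (for `ρ_{Z²}(L,L)` the terms with first derivatives of
`a` cancel), and `L̄_{ρ*}^j (aⁿ f) ≡ ∑_{i ≤ j} c_{j,i} L̄_ρ^i f` with coefficients independent of
`f` and `c_{j,j} = a^{n+j}`. At a zero `p` of `ρ` this factors the matrix for `ρ*` as the matrix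
for `ρ` times an upper triangular matrix with diagonal `a(p)^{n+j}`, whose determinant is
`a(p)^{∑_j (n+j)}`; the sum is `(2n-1)²` for `A_n` and `3n(n+1)/2` for `D_n`.
-/

open scoped ContDiff

section Wirtinger

variable {E : Type*} [NormedAddCommGroup E] [NormedSpace ℝ E]

/-- The operator `(∂_v + s ∂_w) / 2`; each of the four Wirtinger derivatives has this form. -/
def wirtinger (v w : E) (s : ℂ) (f : E → ℂ) (p : E) : ℂ :=
  (fderiv ℝ f p v + s * fderiv ℝ f p w) / 2

variable {v w : E} {s : ℂ} {Ω : Set E} {f g : E → ℂ} {q : E}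

theorem Set.EqOn.wirtinger (hΩ : IsOpen Ω) (h : EqOn f g Ω) :
    EqOn (wirtinger v w s f) (wirtinger v w s g) Ω := fun q hq => by
  simp only [_root_.wirtinger, (h.eventuallyEq_of_mem (hΩ.mem_nhds hq)).fderiv_eq]

theorem ContDiffOn.differentiableAt_of_mem (hf : ContDiffOn ℝ ∞ f Ω) (hΩ : IsOpen Ω)
    (hq : q ∈ Ω) : DifferentiableAt ℝ f q :=
  (hf.contDiffAt (hΩ.mem_nhds hq)).differentiableAt (by simp)

theorem ContDiffOn.wirtinger (hf : ContDiffOn ℝ ∞ f Ω) (hΩ : IsOpen Ω) :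
    ContDiffOn ℝ ∞ (wirtinger v w s f) Ω := by
  have hDf := hf.fderiv_of_isOpen (m := ∞) hΩ le_rfl
  exact ((hDf.clm_apply contDiffOn_const).add
    (contDiffOn_const.mul (hDf.clm_apply contDiffOn_const))).div_const 2

theorem wirtinger_add (hf : DifferentiableAt ℝ f q) (hg : DifferentiableAt ℝ g q) :
    wirtinger v w s (fun p => f p + g p) q = wirtinger v w s f q + wirtinger v w s g q := by
  simp only [wirtinger, fderiv_fun_add hf hg, _root_.add_apply]
  ring

theorem wirtinger_mul (hf : DifferentiableAt ℝ f q) (hg : DifferentiableAt ℝ g q) :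
    wirtinger v w s (fun p => f p * g p) q
      = f q * wirtinger v w s g q + g q * wirtinger v w s f q := by
  simp only [wirtinger, fderiv_fun_mul hf hg, _root_.add_apply,
    _root_.smul_apply, smul_eq_mul]
  ring

theorem wirtinger_sum {ι : Type*} (t : Finset ι) {F : ι → E → ℂ}
    (hF : ∀ i ∈ t, DifferentiableAt ℝ (F i) q) :
    wirtinger v w s (fun p => ∑ i ∈ t, F i p) q = ∑ i ∈ t, wirtinger v w s (F i) q := by
  simp only [wirtinger, fderiv_fun_sum hF, _root_.sum_apply, Finset.mul_sum,
    ← Finset.sum_add_distrib, Finset.sum_div]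

theorem wirtinger_zero : wirtinger v w s 0 q = 0 := by
  simp [wirtinger]

end Wirtinger

section SmoothModEq

variable {E : Type*} [NormedAddCommGroup E] [NormedSpace ℝ E] {Ω : Set E}
  {ρ F G H F' G' : E → ℂ}

/-- `F ≡ G` modulo the ideal generated by `ρ` in the ring of smooth functions on `Ω`. -/
structure SmoothModEq (Ω : Set E) (ρ F G : E → ℂ) : Prop where
  contDiffOn_left : ContDiffOn ℝ ∞ F Ω
  contDiffOn_right : ContDiffOn ℝ ∞ G Ω
  exists_eq_add_mul : ∃ g, ContDiffOn ℝ ∞ g Ω ∧ ∀ q ∈ Ω, F q = G q + ρ q * g q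

namespace SmoothModEq

theorem of_eq_add_mul {g : E → ℂ} (hρ : ContDiffOn ℝ ∞ ρ Ω) (hG : ContDiffOn ℝ ∞ G Ω)
    (hg : ContDiffOn ℝ ∞ g Ω) (h : ∀ q ∈ Ω, F q = G q + ρ q * g q) : SmoothModEq Ω ρ F G :=
  ⟨(hG.add (hρ.mul hg)).congr h, hG, g, hg, h⟩

theorem of_eqOn (hF : ContDiffOn ℝ ∞ F Ω) (h : EqOn F G Ω) : SmoothModEq Ω ρ F G :=
  ⟨hF, hF.congr fun q hq => (h hq).symm, 0, contDiffOn_const, fun q hq => by simp [h hq]⟩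

theorem refl (hF : ContDiffOn ℝ ∞ F Ω) : SmoothModEq Ω ρ F F :=
  of_eqOn hF (eqOn_refl F Ω)

theorem trans (h : SmoothModEq Ω ρ F G) (h' : SmoothModEq Ω ρ G H) : SmoothModEq Ω ρ F H := by
  obtain ⟨hF, -, g, hg, hFG⟩ := h
  obtain ⟨-, hH, g', hg', hGH⟩ := h'
  exact ⟨hF, hH, g + g', hg.add hg',
    fun q hq => by simp only [hFG q hq, hGH q hq, Pi.add_apply]; ring⟩

theorem congr_right (h : SmoothModEq Ω ρ F G) (hG : EqOn G G' Ω) : SmoothModEq Ω ρ F G' :=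
  h.trans (of_eqOn h.contDiffOn_right hG)

theorem add (h : SmoothModEq Ω ρ F G) (h' : SmoothModEq Ω ρ F' G') :
    SmoothModEq Ω ρ (fun q => F q + F' q) (fun q => G q + G' q) := by
  obtain ⟨hF, hG, g, hg, hFG⟩ := h
  obtain ⟨hF', hG', g', hg', hFG'⟩ := h'
  exact ⟨hF.add hF', hG.add hG', g + g', hg.add hg',
    fun q hq => by simp only [hFG q hq, hFG' q hq, Pi.add_apply]; ring⟩

theorem sub (h : SmoothModEq Ω ρ F G) (h' : SmoothModEq Ω ρ F' G') :
    SmoothModEq Ω ρ (fun q => F q - F' q) (fun q => G q - G' q) := by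
  obtain ⟨hF, hG, g, hg, hFG⟩ := h
  obtain ⟨hF', hG', g', hg', hFG'⟩ := h'
  exact ⟨hF.sub hF', hG.sub hG', g - g', hg.sub hg',
    fun q hq => by simp only [hFG q hq, hFG' q hq, Pi.sub_apply]; ring⟩

theorem mul (h : SmoothModEq Ω ρ F G) (h' : SmoothModEq Ω ρ F' G') :
    SmoothModEq Ω ρ (fun q => F q * F' q) (fun q => G q * G' q) := by
  obtain ⟨hF, hG, g, hg, hFG⟩ := h
  obtain ⟨hF', hG', g', hg', hFG'⟩ := h'
  exact ⟨hF.mul hF', hG.mul hG', F * g' + g * G', (hF.mul hg').add (hg.mul hG'),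
    fun q hq => by simp only [hFG' q hq, Pi.add_apply, Pi.mul_apply]; rw [hFG q hq]; ring⟩

theorem pow (h : SmoothModEq Ω ρ F G) (k : ℕ) :
    SmoothModEq Ω ρ (fun q => F q ^ k) (fun q => G q ^ k) := by
  induction k with
  | zero => exact of_eqOn contDiffOn_const fun q _ => rfl
  | succ k ih => simpa only [pow_succ] using ih.mul h

theorem sum {ι : Type*} (t : Finset ι) {F G : ι → E → ℂ}
    (h : ∀ i ∈ t, SmoothModEq Ω ρ (F i) (G i)) :
    SmoothModEq Ω ρ (fun q => ∑ i ∈ t, F i q) (fun q => ∑ i ∈ t, G i q) := by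
  classical
  induction t using Finset.induction_on with
  | empty => exact of_eqOn contDiffOn_const fun q _ => rfl
  | insert i t hi ih =>
    simp only [Finset.sum_insert hi]
    exact (h i (Finset.mem_insert_self i t)).add
      (ih fun j hj => h j (Finset.mem_insert_of_mem hj))

theorem eq_of_eq_zero (h : SmoothModEq Ω ρ F G) {p : E} (hp : p ∈ Ω) (hp0 : ρ p = 0) :
    F p = G p := by
  obtain ⟨-, -, g, -, hFG⟩ := h
  simp [hFG p hp, hp0]

end SmoothModEq

end SmoothModEq

section Lbar

theorem wdz_eq_wirtinger : wdz = wirtinger (1, 0) (I, 0) (-I) := by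
  ext f p
  simp [wdz, wirtinger, sub_eq_add_neg]

theorem wdw_eq_wirtinger : wdw = wirtinger (0, 1) (0, I) (-I) := by
  ext f p
  simp [wdw, wirtinger, sub_eq_add_neg]

theorem wdzb_eq_wirtinger : wdzb = wirtinger (1, 0) (I, 0) I := rfl

theorem wdwb_eq_wirtinger : wdwb = wirtinger (0, 1) (0, I) I := rfl

variable {Ω : Set (ℂ × ℂ)} {σ ρ a f g : ℂ × ℂ → ℂ} {q : ℂ × ℂ}

theorem ContDiffOn.wdz (hf : ContDiffOn ℝ ∞ f Ω) (hΩ : IsOpen Ω) :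
    ContDiffOn ℝ ∞ (_root_.wdz f) Ω :=
  wdz_eq_wirtinger ▸ hf.wirtinger hΩ

theorem ContDiffOn.wdw (hf : ContDiffOn ℝ ∞ f Ω) (hΩ : IsOpen Ω) :
    ContDiffOn ℝ ∞ (_root_.wdw f) Ω :=
  wdw_eq_wirtinger ▸ hf.wirtinger hΩ

theorem Set.EqOn.Lbar (hΩ : IsOpen Ω) (h : EqOn f g Ω) :
    EqOn (_root_.Lbar σ f) (_root_.Lbar σ g) Ω := fun q hq => by
  simp only [_root_.Lbar, wdzb_eq_wirtinger, wdwb_eq_wirtinger, h.wirtinger hΩ hq]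

theorem ContDiffOn.Lbar (hf : ContDiffOn ℝ ∞ f Ω) (hΩ : IsOpen Ω)
    (hσ : ContDiffOn ℝ ∞ σ Ω) :
    ContDiffOn ℝ ∞ (_root_.Lbar σ f) Ω :=
  ((hσ.wirtinger hΩ).neg.mul (hf.wirtinger hΩ)).add ((hσ.wirtinger hΩ).mul (hf.wirtinger hΩ))

theorem ContDiffOn.iterate_Lbar (hf : ContDiffOn ℝ ∞ f Ω) (hΩ : IsOpen Ω)
    (hσ : ContDiffOn ℝ ∞ σ Ω) (j : ℕ) : ContDiffOn ℝ ∞ ((_root_.Lbar σ)^[j] f) Ω := by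
  induction j with
  | zero => exact hf
  | succ j ih => simpa only [Function.iterate_succ_apply'] using ih.Lbar hΩ hσ

theorem Lbar_add (hf : DifferentiableAt ℝ f q) (hg : DifferentiableAt ℝ g q) :
    Lbar σ (fun p => f p + g p) q = Lbar σ f q + Lbar σ g q := by
  simp only [Lbar, wdzb_eq_wirtinger, wdwb_eq_wirtinger, wirtinger_add hf hg]
  ring

theorem Lbar_mul (hf : DifferentiableAt ℝ f q) (hg : DifferentiableAt ℝ g q) :
    Lbar σ (fun p => f p * g p) q = f q * Lbar σ g q + g q * Lbar σ f q := by
  simp only [Lbar, wdzb_eq_wirtinger, wdwb_eq_wirtinger, wirtinger_mul hf hg]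
  ring

theorem Lbar_sum {ι : Type*} (t : Finset ι) {F : ι → ℂ × ℂ → ℂ}
    (hF : ∀ i ∈ t, DifferentiableAt ℝ (F i) q) :
    Lbar σ (fun p => ∑ i ∈ t, F i p) q = ∑ i ∈ t, Lbar σ (F i) q := by
  simp only [Lbar, wdzb_eq_wirtinger, wdwb_eq_wirtinger, wirtinger_sum t hF, Finset.mul_sum,
    ← Finset.sum_add_distrib]

theorem Lbar_zero : Lbar σ 0 q = 0 := by
  simp only [Lbar, wdzb_eq_wirtinger, wdwb_eq_wirtinger, wirtinger_zero]
  ring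

theorem Lbar_self : Lbar σ σ q = 0 := by
  simp only [Lbar]
  ring

theorem Lbar_of_mul (ha : DifferentiableAt ℝ a q) (hρ : DifferentiableAt ℝ ρ q) :
    Lbar (fun p => a p * ρ p) f q = a q * Lbar ρ f q + ρ q * Lbar a f q := by
  simp only [Lbar, wdzb_eq_wirtinger, wdwb_eq_wirtinger, wirtinger_mul ha hρ]
  ring

end Lbar

section ProductDefiningFunction

variable {E : Type*} [NormedAddCommGroup E] [NormedSpace ℝ E] {Ω : Set E} {ρ a : E → ℂ}
  {v w v' w' : E} {s s' : ℂ}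

theorem wirtinger_mul_modEq (hΩ : IsOpen Ω) (hρ : ContDiffOn ℝ ∞ ρ Ω)
    (ha : ContDiffOn ℝ ∞ a Ω) :
    SmoothModEq Ω ρ (wirtinger v w s fun q => a q * ρ q) fun q => a q * wirtinger v w s ρ q :=
  .of_eq_add_mul hρ (ha.mul (hρ.wirtinger hΩ)) (ha.wirtinger hΩ) fun _ hq =>
    wirtinger_mul (ha.differentiableAt_of_mem hΩ hq) (hρ.differentiableAt_of_mem hΩ hq)

theorem wirtinger_wirtinger_mul_modEq (hΩ : IsOpen Ω) (hρ : ContDiffOn ℝ ∞ ρ Ω)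
    (ha : ContDiffOn ℝ ∞ a Ω) :
    SmoothModEq Ω ρ (wirtinger v' w' s' (wirtinger v w s fun q => a q * ρ q)) fun q =>
      a q * wirtinger v' w' s' (wirtinger v w s ρ) q
        + wirtinger v' w' s' a q * wirtinger v w s ρ q
        + wirtinger v w s a q * wirtinger v' w' s' ρ q := by
  have hDρ : ContDiffOn ℝ ∞ (wirtinger v w s ρ) Ω := hρ.wirtinger hΩ
  have hDa : ContDiffOn ℝ ∞ (wirtinger v w s a) Ω := ha.wirtinger hΩ
  refine .of_eq_add_mul (g := wirtinger v' w' s' (wirtinger v w s a)) hρ ?_ (hDa.wirtinger hΩ)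
    fun q hq => ?_
  · exact ((ha.mul (hDρ.wirtinger hΩ)).add ((ha.wirtinger hΩ).mul hDρ)).add
      (hDa.mul (hρ.wirtinger hΩ))
  have hD : EqOn (wirtinger v w s fun q => a q * ρ q)
      (fun q => a q * wirtinger v w s ρ q + ρ q * wirtinger v w s a q) Ω := fun q hq =>
    wirtinger_mul (ha.differentiableAt_of_mem hΩ hq) (hρ.differentiableAt_of_mem hΩ hq)
  have hdiff {f : E → ℂ} (hf : ContDiffOn ℝ ∞ f Ω) := hf.differentiableAt_of_mem hΩ hq
  rw [hD.wirtinger hΩ hq, wirtinger_add (hdiff (ha.mul hDρ)) (hdiff (hρ.mul hDa)),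
    wirtinger_mul (hdiff ha) (hdiff hDρ), wirtinger_mul (hdiff hρ) (hdiff hDa)]
  ring

end ProductDefiningFunction

section Rows

variable {Ω : Set (ℂ × ℂ)} {ρ a : ℂ × ℂ → ℂ}

theorem ContDiffOn.rhoZ2LL (hρ : ContDiffOn ℝ ∞ ρ Ω) (hΩ : IsOpen Ω) :
    ContDiffOn ℝ ∞ (rhoZ2LL ρ) Ω := by
  have hz := hρ.wdz hΩ
  have hw := hρ.wdw hΩ
  unfold _root_.rhoZ2LL
  exact (((hz.wdz hΩ).mul (hw.pow 2)).sub
    (((contDiffOn_const.mul (hz.wdw hΩ)).mul hz).mul hw)).add ((hw.wdw hΩ).mul (hz.pow 2))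

theorem rhoZ2LL_mul_modEq (hΩ : IsOpen Ω) (hρ : ContDiffOn ℝ ∞ ρ Ω)
    (ha : ContDiffOn ℝ ∞ a Ω) :
    SmoothModEq Ω ρ (rhoZ2LL fun q => a q * ρ q) fun q => a q ^ 3 * rhoZ2LL ρ q := by
  unfold rhoZ2LL
  simp only [wdz_eq_wirtinger, wdw_eq_wirtinger]
  have hz := wirtinger_mul_modEq (v := (1, 0)) (w := (I, 0)) (s := -I) hΩ hρ ha
  have hw := wirtinger_mul_modEq (v := (0, 1)) (w := (0, I)) (s := -I) hΩ hρ ha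
  have hzz := wirtinger_wirtinger_mul_modEq (v := (1, 0)) (w := (I, 0)) (s := -I)
    (v' := (1, 0)) (w' := (I, 0)) (s' := -I) hΩ hρ ha
  have hzw := wirtinger_wirtinger_mul_modEq (v := (1, 0)) (w := (I, 0)) (s := -I)
    (v' := (0, 1)) (w' := (0, I)) (s' := -I) hΩ hρ ha
  have hww := wirtinger_wirtinger_mul_modEq (v := (0, 1)) (w := (0, I)) (s := -I)
    (v' := (0, 1)) (w' := (0, I)) (s' := -I) hΩ hρ ha
  have two : SmoothModEq Ω ρ (fun _ => 2) (fun _ => 2) := .refl contDiffOn_const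
  -- the terms containing first derivatives of `a` cancel because `ρ_z ρ_w - ρ_w ρ_z = 0`
  refine (((hzz.mul (hw.pow 2)).sub (((two.mul hzw).mul hz).mul hw)).add
    (hww.mul (hz.pow 2))).congr_right fun q _ => ?_
  ring

theorem monomial_mul_modEq (hΩ : IsOpen Ω) (hρ : ContDiffOn ℝ ∞ ρ Ω)
    (ha : ContDiffOn ℝ ∞ a Ω) (k m : ℕ) :
    SmoothModEq Ω ρ (fun q => wdz (fun q => a q * ρ q) q ^ k * wdw (fun q => a q * ρ q) q ^ m)
      fun q => a q ^ (k + m) * (wdz ρ q ^ k * wdw ρ q ^ m) := by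
  rw [wdz_eq_wirtinger, wdw_eq_wirtinger]
  refine (((wirtinger_mul_modEq hΩ hρ ha).pow k).mul
    ((wirtinger_mul_modEq hΩ hρ ha).pow m)).congr_right fun q _ => ?_
  ring

theorem ContDiffOn.rowA (hρ : ContDiffOn ℝ ∞ ρ Ω) (hΩ : IsOpen Ω) (n i : ℕ) :
    ContDiffOn ℝ ∞ (rowA ρ n i) Ω := by
  unfold _root_.rowA
  split_ifs
  · exact ((hρ.wdz hΩ).pow _).mul ((hρ.wdw hΩ).pow _)
  · exact (((hρ.wdz hΩ).pow _).mul ((hρ.wdw hΩ).pow _)).mul (hρ.rhoZ2LL hΩ)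

theorem rowA_mul_modEq (hΩ : IsOpen Ω) (hρ : ContDiffOn ℝ ∞ ρ Ω) (ha : ContDiffOn ℝ ∞ a Ω)
    {n i : ℕ} (hi : i < 2 * n - 1) :
    SmoothModEq Ω ρ (rowA (fun q => a q * ρ q) n i) fun q => a q ^ n * rowA ρ n i q := by
  unfold rowA
  split_ifs with h
  · simpa only [Nat.add_sub_cancel' h] using monomial_mul_modEq hΩ hρ ha i (n - i)
  · refine ((monomial_mul_modEq hΩ hρ ha _ _).mul (rhoZ2LL_mul_modEq hΩ hρ ha)).congr_right
      fun q _ => ?_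
    have hpow : a q ^ n = a q ^ (i - (n + 1) + (n - 3 - (i - (n + 1)))) * a q ^ 3 := by
      rw [← pow_add]
      congr 1
      omega
    simp only [hpow]
    ring

end Rows

section Expansion

variable {Ω : Set (ℂ × ℂ)} {ρ a f F G : ℂ × ℂ → ℂ}

/-- The coefficients in `L̄_σ^j (aⁿ f) ≡ ∑_{i ≤ j} lbarCoeff σ a n j i · L̄_ρ^i f (mod ρ)` for
`σ = aρ`; the recursion comes from
`L̄_σ (c · L̄_ρ^i f) ≡ L̄_σ c · L̄_ρ^i f + a c · L̄_ρ^{i+1} f`. -/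
def lbarCoeff (σ a : ℂ × ℂ → ℂ) (n : ℕ) : ℕ → ℕ → ℂ × ℂ → ℂ
  | 0, 0 => fun q => a q ^ n
  | 0, _ + 1 => 0
  | j + 1, 0 => Lbar σ (lbarCoeff σ a n j 0)
  | j + 1, i + 1 => fun q => Lbar σ (lbarCoeff σ a n j (i + 1)) q + a q * lbarCoeff σ a n j i q

theorem lbarCoeff_eq_zero_of_lt {σ : ℂ × ℂ → ℂ} {n j i : ℕ} (h : j < i) :
    lbarCoeff σ a n j i = 0 := by
  induction j generalizing i with
  | zero => obtain ⟨i, rfl⟩ := Nat.exists_eq_add_one_of_ne_zero h.ne'; rfl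
  | succ j ih =>
    obtain ⟨i, rfl⟩ := Nat.exists_eq_add_one_of_ne_zero (by omega : i ≠ 0)
    funext q
    simp only [lbarCoeff, ih (by omega : j < i + 1), ih (by omega : j < i), Lbar_zero,
      Pi.zero_apply, mul_zero, add_zero]

theorem lbarCoeff_self (σ : ℂ × ℂ → ℂ) (n j : ℕ) :
    lbarCoeff σ a n j j = fun q => a q ^ (n + j) := by
  induction j with
  | zero => rfl
  | succ j ih =>
    funext q
    simp only [lbarCoeff, lbarCoeff_eq_zero_of_lt (Nat.lt_succ_self j), Lbar_zero, ih]
    ring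

theorem ContDiffOn.lbarCoeff {σ : ℂ × ℂ → ℂ} (hσ : ContDiffOn ℝ ∞ σ Ω)
    (ha : ContDiffOn ℝ ∞ a Ω) (hΩ : IsOpen Ω) (n j i : ℕ) :
    ContDiffOn ℝ ∞ (lbarCoeff σ a n j i) Ω := by
  induction j generalizing i with
  | zero => cases i <;> simp only [_root_.lbarCoeff]; exacts [ha.pow n, contDiffOn_const]
  | succ j ih =>
    cases i
    · exact (ih 0).Lbar hΩ hσ
    · exact ((ih _).Lbar hΩ hσ).add (ha.mul (ih _))

theorem Lbar_of_mul_modEq (hΩ : IsOpen Ω) (hρ : ContDiffOn ℝ ∞ ρ Ω) (ha : ContDiffOn ℝ ∞ a Ω)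
    (hf : ContDiffOn ℝ ∞ f Ω) :
    SmoothModEq Ω ρ (Lbar (fun q => a q * ρ q) f) fun q => a q * Lbar ρ f q :=
  .of_eq_add_mul hρ (ha.mul (hf.Lbar hΩ hρ)) (hf.Lbar hΩ ha) fun _ hq =>
    Lbar_of_mul (ha.differentiableAt_of_mem hΩ hq) (hρ.differentiableAt_of_mem hΩ hq)

-- The point is that `L̄_{aρ} ρ = ρ L̄_a ρ` lies in the ideal.
theorem SmoothModEq.Lbar_of_mul (h : SmoothModEq Ω ρ F G) (hΩ : IsOpen Ω)
    (hρ : ContDiffOn ℝ ∞ ρ Ω) (ha : ContDiffOn ℝ ∞ a Ω) :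
    SmoothModEq Ω ρ (Lbar (fun q => a q * ρ q) F) (Lbar (fun q => a q * ρ q) G) := by
  obtain ⟨-, hG, g, hg, hFG⟩ := h
  have hσ : ContDiffOn ℝ ∞ (fun q => a q * ρ q) Ω := ha.mul hρ
  refine .of_eq_add_mul (g := fun q => Lbar (fun q => a q * ρ q) g q + g q * Lbar a ρ q) hρ
    (hG.Lbar hΩ hσ) ((hg.Lbar hΩ hσ).add (hg.mul (hρ.Lbar hΩ ha))) fun q hq => ?_
  have hdiff {f : ℂ × ℂ → ℂ} (hf : ContDiffOn ℝ ∞ f Ω) := hf.differentiableAt_of_mem hΩ hq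
  rw [Set.EqOn.Lbar hΩ (fun q hq => hFG q hq) hq, Lbar_add (hdiff hG) (hdiff (hρ.mul hg)),
    Lbar_mul (hdiff hρ) (hdiff hg), _root_.Lbar_of_mul (f := ρ) (hdiff ha) (hdiff hρ),
    Lbar_self]
  ring

theorem SmoothModEq.iterate_Lbar_of_mul (h : SmoothModEq Ω ρ F G) (hΩ : IsOpen Ω)
    (hρ : ContDiffOn ℝ ∞ ρ Ω) (ha : ContDiffOn ℝ ∞ a Ω) (j : ℕ) :
    SmoothModEq Ω ρ ((Lbar fun q => a q * ρ q)^[j] F) ((Lbar fun q => a q * ρ q)^[j] G) := by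
  induction j with
  | zero => exact h
  | succ j ih =>
    simpa only [Function.iterate_succ_apply'] using ih.Lbar_of_mul hΩ hρ ha

theorem sum_range_succ_eq_sum_shift {R : Type*} [CommRing R] (m : ℕ) (a : R)
    (x y c d c' : ℕ → R) (hy : ∀ i, y i = x (i + 1)) (h0 : c' 0 = d 0)
    (hsucc : ∀ i, c' (i + 1) = d (i + 1) + a * c i) (hm : d m = 0) :
    ∑ i ∈ Finset.range (m + 1), c' i * x i
      = ∑ i ∈ Finset.range m, (c i * (a * y i) + x i * d i) := by
  have hd : ∑ i ∈ Finset.range m, x i * d i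
      = ∑ i ∈ Finset.range m, x (i + 1) * d (i + 1) + x 0 * d 0 := by
    rw [← Finset.sum_range_succ' (fun i => x i * d i), Finset.sum_range_succ, hm, mul_zero,
      add_zero]
  have hterm : ∀ i, c' (i + 1) * x (i + 1) = c i * (a * y i) + x (i + 1) * d (i + 1) := by
    intro i
    rw [hsucc, hy]
    ring
  rw [Finset.sum_range_succ', h0, Finset.sum_add_distrib, hd]
  simp only [hterm, Finset.sum_add_distrib]
  ring

theorem Lbar_of_mul_sum_lbarCoeff_modEq (hΩ : IsOpen Ω) (hρ : ContDiffOn ℝ ∞ ρ Ω)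
    (ha : ContDiffOn ℝ ∞ a Ω) (hf : ContDiffOn ℝ ∞ f Ω) (n j : ℕ) :
    SmoothModEq Ω ρ
      (Lbar (fun q => a q * ρ q) fun q => ∑ i ∈ Finset.range (j + 1),
        lbarCoeff (fun q => a q * ρ q) a n j i q * (Lbar ρ)^[i] f q)
      fun q => ∑ i ∈ Finset.range (j + 2),
        lbarCoeff (fun q => a q * ρ q) a n (j + 1) i q * (Lbar ρ)^[i] f q := by
  set σ : ℂ × ℂ → ℂ := fun q => a q * ρ q
  have hσ : ContDiffOn ℝ ∞ σ Ω := ha.mul hρ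
  set c := lbarCoeff σ a n
  have hc : ∀ i, ContDiffOn ℝ ∞ (c j i) Ω := hσ.lbarCoeff ha hΩ n j
  have hLf := hf.iterate_Lbar hΩ hρ
  have hLeibniz : EqOn (Lbar σ fun q => ∑ i ∈ Finset.range (j + 1), c j i q * (Lbar ρ)^[i] f q)
      (fun q => ∑ i ∈ Finset.range (j + 1),
        (c j i q * Lbar σ ((Lbar ρ)^[i] f) q + (Lbar ρ)^[i] f q * Lbar σ (c j i) q)) Ω :=
    fun q hq => by
      have hdiff {f : ℂ × ℂ → ℂ} (hf : ContDiffOn ℝ ∞ f Ω) := hf.differentiableAt_of_mem hΩ hq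
      rw [Lbar_sum _ fun i _ => hdiff ((hc i).mul (hLf i))]
      exact Finset.sum_congr rfl fun i _ => Lbar_mul (hdiff (hc i)) (hdiff (hLf i))
  have hsmooth : ContDiffOn ℝ ∞
      (Lbar σ fun q => ∑ i ∈ Finset.range (j + 1), c j i q * (Lbar ρ)^[i] f q) Ω :=
    (ContDiffOn.sum fun i _ => (hc i).mul (hLf i)).Lbar hΩ hσ
  have hmodρ : SmoothModEq Ω ρ
      (fun q => ∑ i ∈ Finset.range (j + 1),
        (c j i q * Lbar σ ((Lbar ρ)^[i] f) q + (Lbar ρ)^[i] f q * Lbar σ (c j i) q))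
      (fun q => ∑ i ∈ Finset.range (j + 1),
        (c j i q * (a q * Lbar ρ ((Lbar ρ)^[i] f) q) + (Lbar ρ)^[i] f q * Lbar σ (c j i) q)) :=
    .sum _ fun i _ => ((SmoothModEq.refl (hc i)).mul (Lbar_of_mul_modEq hΩ hρ ha (hLf i))).add
      (.refl ((hLf i).mul ((hc i).Lbar hΩ hσ)))
  refine ((SmoothModEq.of_eqOn hsmooth hLeibniz).trans hmodρ).congr_right fun q _ => ?_
  exact (sum_range_succ_eq_sum_shift (j + 1) (a q) (fun i => (Lbar ρ)^[i] f q)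
    (fun i => Lbar ρ ((Lbar ρ)^[i] f) q) (fun i => c j i q) (fun i => Lbar σ (c j i) q)
    (fun i => c (j + 1) i q) (fun i => (congrFun (Function.iterate_succ_apply' _ i f) q).symm)
    rfl (fun i => rfl)
    (by simp only [c, lbarCoeff_eq_zero_of_lt (Nat.lt_succ_self j), Lbar_zero])).symm

theorem iterate_Lbar_of_mul_modEq (hΩ : IsOpen Ω) (hρ : ContDiffOn ℝ ∞ ρ Ω)
    (ha : ContDiffOn ℝ ∞ a Ω) (hf : ContDiffOn ℝ ∞ f Ω) (n j : ℕ) :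
    SmoothModEq Ω ρ ((Lbar fun q => a q * ρ q)^[j] fun q => a q ^ n * f q) fun q =>
      ∑ i ∈ Finset.range (j + 1),
        lbarCoeff (fun q => a q * ρ q) a n j i q * (Lbar ρ)^[i] f q := by
  induction j with
  | zero => exact .of_eqOn ((ha.pow n).mul hf) fun q _ => by simp [lbarCoeff]
  | succ j ih =>
    rw [Function.iterate_succ_apply']
    exact (ih.Lbar_of_mul hΩ hρ ha).trans (Lbar_of_mul_sum_lbarCoeff_modEq hΩ hρ ha hf n j)

end Expansion

theorem det_iterate_Lbar_of_mul {Ω : Set (ℂ × ℂ)} {ρ a : ℂ × ℂ → ℂ} (hΩ : IsOpen Ω)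
    (hρ : ContDiffOn ℝ ∞ ρ Ω) (ha : ContDiffOn ℝ ∞ a Ω) {n N : ℕ} {F G : ℕ → ℂ × ℂ → ℂ}
    (hG : ∀ i, ContDiffOn ℝ ∞ (G i) Ω)
    (hFG : ∀ i < N, SmoothModEq Ω ρ (F i) fun q => a q ^ n * G i q)
    {p : ℂ × ℂ} (hp : p ∈ Ω) (hp0 : ρ p = 0) :
    (Matrix.of fun i j : Fin N => (Lbar fun q => a q * ρ q)^[j] (F i) p).det
      = a p ^ (∑ j ∈ Finset.range N, (n + j))
        * (Matrix.of fun i j : Fin N => (Lbar ρ)^[j] (G i) p).det := by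
  set c := lbarCoeff (fun q => a q * ρ q) a n
  set T : Matrix (Fin N) (Fin N) ℂ := .of fun i j => c j i p
  have hT : T.BlockTriangular id := fun i j hij => by
    simp [T, c, lbarCoeff_eq_zero_of_lt (show (j : ℕ) < i from hij)]
  have hdetT : T.det = a p ^ (∑ j ∈ Finset.range N, (n + j)) := by
    rw [det_of_isUpperTriangular hT, ← Finset.prod_pow_eq_pow_sum,
      ← Fin.prod_univ_eq_prod_range (fun j => a p ^ (n + j))]
    simp [T, c, lbarCoeff_self]
  have hentry (i j : Fin N) : (Lbar fun q => a q * ρ q)^[j] (F i) p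
      = ∑ m ∈ Finset.range N, (Lbar ρ)^[m] (G i) p * c j m p := by
    calc (Lbar fun q => a q * ρ q)^[j] (F i) p
        = ∑ m ∈ Finset.range (j + 1), c j m p * (Lbar ρ)^[m] (G i) p :=
          (((hFG i i.2).iterate_Lbar_of_mul hΩ hρ ha j).trans
            (iterate_Lbar_of_mul_modEq hΩ hρ ha (hG i) n j)).eq_of_eq_zero hp hp0
      _ = ∑ m ∈ Finset.range N, c j m p * (Lbar ρ)^[m] (G i) p :=
          Finset.sum_subset (Finset.range_subset_range.2 j.2) fun m _ hm => by
            simp [c, lbarCoeff_eq_zero_of_lt (by simpa using hm : (j : ℕ) < m)]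
      _ = _ := Finset.sum_congr rfl fun m _ => mul_comm _ _
  have hmul : (Matrix.of fun i j : Fin N => (Lbar fun q => a q * ρ q)^[j] (F i) p)
      = (Matrix.of fun i j : Fin N => (Lbar ρ)^[j] (G i) p) * T := by
    ext i j
    rw [of_apply, hentry, mul_apply, ← Fin.sum_univ_eq_sum_range]
    rfl
  rw [hmul, det_mul, hdetT, mul_comm]

theorem sum_range_two_mul_sub_one_add (n : ℕ) :
    ∑ j ∈ Finset.range (2 * n - 1), (n + j) = (2 * n - 1) ^ 2 := by
  rcases n with _ | m
  · rfl
  have hgauss := Finset.sum_range_id_mul_two (2 * m + 1)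
  rw [show 2 * (m + 1) - 1 = 2 * m + 1 by omega, Finset.sum_add_distrib, Finset.sum_const,
    Finset.card_range, smul_eq_mul]
  simp only [add_tsub_cancel_right] at hgauss
  nlinarith

theorem sum_range_succ_add (n : ℕ) :
    ∑ j ∈ Finset.range (n + 1), (n + j) = 3 * n * (n + 1) / 2 := by
  have hgauss := Finset.sum_range_id_mul_two (n + 1)
  rw [Finset.sum_add_distrib, Finset.sum_const, Finset.card_range, smul_eq_mul]
  simp only [add_tsub_cancel_right] at hgauss
  refine (Nat.div_eq_of_eq_mul_left two_pos ?_).symm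
  nlinarith

theorem detA_detD_defining_function_rule_general (n : ℕ)
    (Ω : Set (ℂ × ℂ)) (hΩ : IsOpen Ω)
    (ρ a : ℂ × ℂ → ℂ) (hρ : ContDiffOn ℝ (⊤ : ℕ∞) ρ Ω)
    (ha : ContDiffOn ℝ (⊤ : ℕ∞) a Ω)
    (p : ℂ × ℂ) (hp : p ∈ Ω) (hp0 : ρ p = 0) :
    (matA (fun q => a q * ρ q) n p).det = (a p) ^ ((2 * n - 1) ^ 2) * (matA ρ n p).det ∧
      (matD (fun q => a q * ρ q) n p).det =
        (a p) ^ (3 * n * (n + 1) / 2) * (matD ρ n p).det := by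
  constructor
  · rw [← sum_range_two_mul_sub_one_add]
    exact det_iterate_Lbar_of_mul hΩ hρ ha (fun i => hρ.rowA hΩ n i)
      (fun i hi => rowA_mul_modEq hΩ hρ ha hi) hp hp0
  · rw [← sum_range_succ_add]
    exact det_iterate_Lbar_of_mul (n := n) (N := n + 1) hΩ hρ ha
      (fun k => ((hρ.wdz hΩ).pow k).mul ((hρ.wdw hΩ).pow (n - k)))
      (fun k hk => by simpa only [Nat.add_sub_cancel' (by omega : k ≤ n)]
        using monomial_mul_modEq hΩ hρ ha k (n - k)) hp hp0

/-- **Transformation rule under change of defining function** (part of the proof of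
Theorem 2.1): if `ρ* = a·ρ` with `a` smooth, real-valued and nowhere vanishing, then at every
point `p` with `ρ(p) = 0`, `det Aₙ(ρ*)(p) = a(p)^{(2n-1)²} det Aₙ(ρ)(p)` and
`det Dₙ(ρ*)(p) = a(p)^{3n(n+1)/2} det Dₙ(ρ)(p)`. -/
theorem detA_detD_defining_function_rule (n : ℕ) (hn : 3 ≤ n)
    (Ω : Set (ℂ × ℂ)) (hΩ : IsOpen Ω)
    (ρ a : ℂ × ℂ → ℂ) (hρ : ContDiffOn ℝ (⊤ : ℕ∞) ρ Ω) (hρreal : ∀ q ∈ Ω, (ρ q).im = 0)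
    (ha : ContDiffOn ℝ (⊤ : ℕ∞) a Ω) (hareal : ∀ q ∈ Ω, (a q).im = 0)
    (ha0 : ∀ q ∈ Ω, a q ≠ 0)
    (p : ℂ × ℂ) (hp : p ∈ Ω) (hp0 : ρ p = 0) :
    (matA (fun q => a q * ρ q) n p).det = (a p) ^ ((2 * n - 1) ^ 2) * (matA ρ n p).det ∧
      (matD (fun q => a q * ρ q) n p).det =
        (a p) ^ (3 * n * (n + 1) / 2) * (matD ρ n p).det :=
  detA_detD_defining_function_rule_general n Ω hΩ ρ a hρ ha p hp hp0
end
end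

section
/- Let Ω, Ω′ ⊂ ℂ² be open, let H : Ω → Ω′ be holomorphic with everywhere invertible complex Jacobian H′, let ρ* : Ω′ → ℝ be smooth, and set ρ := ρ* ∘ H. Let L be the operator built from ρ and L* the operator built from ρ*. Then for every smooth function u : Ω′ → ℂ and every Z ∈ Ω, L(u ∘ H)(Z) = det H′(Z) · (L*u)(H(Z)). (That is, the pushforward of L under H equals det H′ times L*.) -/
noncomputable section

open Complex Matrix Set

private lemma clm_apply_basis (L' : ℂ × ℂ →L[ℝ] ℂ) (q : ℂ × ℂ) :
    L' q = q.1.re • L' (1,0) + q.1.im • L' (I,0) + q.2.re • L' (0,1) + q.2.im • L' (0,I) := by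
  have hq : q = q.1.re • ((1:ℂ),(0:ℂ)) + q.1.im • (I,(0:ℂ)) + q.2.re • ((0:ℂ),(1:ℂ))
      + q.2.im • ((0:ℂ),I) := by
    apply Prod.ext <;> simp [Complex.real_smul, Complex.re_add_im]
  conv_lhs => rw [hq]
  simp only [map_add, _root_.map_smul]

private lemma smul_decomp (z A B : ℂ) :
    z.re • A + z.im • B = (A - I * B) / 2 * z + (A + I * B) / 2 * (starRingEnd ℂ) z := by
  have h1 : (starRingEnd ℂ) z = ↑z.re - ↑z.im * I := by
    apply Complex.ext <;> simp
  rw [h1, Complex.real_smul, Complex.real_smul]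
  linear_combination (↑z.im * B) * Complex.I_mul_I + ((A - I*B)/2) * (Complex.re_add_im z)

private lemma clm_apply_complex (L' : ℂ × ℂ →L[ℝ] ℂ) (q : ℂ × ℂ) :
    L' q = (L' (1,0) - I * L' (I,0)) / 2 * q.1 + (L' (1,0) + I * L' (I,0)) / 2 * (starRingEnd ℂ) q.1
      + (L' (0,1) - I * L' (0,I)) / 2 * q.2 + (L' (0,1) + I * L' (0,I)) / 2 * (starRingEnd ℂ) q.2 := by
  rw [clm_apply_basis, add_assoc (q.1.re • L' (1,0) + q.1.im • L' (I,0)), smul_decomp q.1,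
    smul_decomp q.2]
  ring

private lemma clm_key (L' : ℂ × ℂ →L[ℝ] ℂ) (q : ℂ × ℂ) :
    L' q - I * L' ((I:ℂ) • q) = (L' (1,0) - I * L' (I,0)) * q.1 + (L' (0,1) - I * L' (0,I)) * q.2 := by
  rw [clm_apply_complex L' q, clm_apply_complex L' ((I:ℂ) • q)]
  simp only [Prod.smul_fst, Prod.smul_snd, smul_eq_mul, _root_.map_mul, Complex.conj_I]
  linear_combination ((L' (1,0) + I*L' (I,0))/2 * ((starRingEnd ℂ) q.1)
    - (L' (1,0) - I*L' (I,0))/2 * q.1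
    + (L' (0,1) + I*L' (0,I))/2 * ((starRingEnd ℂ) q.2)
    - (L' (0,1) - I*L' (0,I))/2 * q.2) * Complex.I_mul_I

private lemma wd_comp (H : ℂ × ℂ → ℂ × ℂ) (f : ℂ × ℂ → ℂ) (Z : ℂ × ℂ)
    (hH : DifferentiableAt ℂ H Z) (hf : DifferentiableAt ℝ f (H Z)) :
    (wdz (fun q => f (H q)) Z = wdz f (H Z) * wdz (fun q => (H q).1) Z
      + wdw f (H Z) * wdz (fun q => (H q).2) Z) ∧
    (wdw (fun q => f (H q)) Z = wdz f (H Z) * wdw (fun q => (H q).1) Z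
      + wdw f (H Z) * wdw (fun q => (H q).2) Z) := by
  have hHr : DifferentiableAt ℝ H Z := hH.restrictScalars ℝ
  have hcomp : fderiv ℝ (fun q => f (H q)) Z = (fderiv ℝ f (H Z)).comp (fderiv ℝ H Z) :=
    fderiv_comp Z hf hHr
  have hsm : ∀ v : ℂ × ℂ, fderiv ℝ H Z ((I:ℂ) • v) = I • fderiv ℝ H Z v := by
    intro v
    rw [hH.fderiv_restrictScalars ℝ]
    simp
  have hD1 : fderiv ℝ (fun q => (H q).1) Z
      = (ContinuousLinearMap.fst ℝ ℂ ℂ).comp (fderiv ℝ H Z) :=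
    ((ContinuousLinearMap.fst ℝ ℂ ℂ).hasFDerivAt.comp Z hHr.hasFDerivAt).fderiv
  have hD2 : fderiv ℝ (fun q => (H q).2) Z
      = (ContinuousLinearMap.snd ℝ ℂ ℂ).comp (fderiv ℝ H Z) :=
    ((ContinuousLinearMap.snd ℝ ℂ ℂ).hasFDerivAt.comp Z hHr.hasFDerivAt).fderiv
  have hI0 : fderiv ℝ H Z (I,0) = (I:ℂ) • fderiv ℝ H Z (1,0) := by
    rw [show ((I:ℂ),(0:ℂ)) = (I:ℂ) • ((1:ℂ),(0:ℂ)) by simp, hsm]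
  have h0I : fderiv ℝ H Z (0,I) = (I:ℂ) • fderiv ℝ H Z (0,1) := by
    rw [show ((0:ℂ),(I:ℂ)) = (I:ℂ) • ((0:ℂ),(1:ℂ)) by simp, hsm]
  have hhalf : ∀ z : ℂ, (z - I * (I * z)) / 2 = z := by
    intro z
    rw [← mul_assoc, Complex.I_mul_I]
    ring
  constructor
  · simp only [wdz, wdw, hcomp, ContinuousLinearMap.comp_apply, hI0, hD1, hD2,
      ContinuousLinearMap.coe_fst', ContinuousLinearMap.coe_snd', Prod.smul_fst, Prod.smul_snd,
      smul_eq_mul, hhalf]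
    rw [show fderiv ℝ f (H Z) (fderiv ℝ H Z (1, 0)) -
        I * fderiv ℝ f (H Z) ((I:ℂ) • fderiv ℝ H Z (1, 0)) =
        (fderiv ℝ f (H Z) (1,0) - I * fderiv ℝ f (H Z) (I,0)) * (fderiv ℝ H Z (1,0)).1
        + (fderiv ℝ f (H Z) (0,1) - I * fderiv ℝ f (H Z) (0,I)) * (fderiv ℝ H Z (1,0)).2
      from clm_key (fderiv ℝ f (H Z)) (fderiv ℝ H Z (1,0))]
    ring
  · simp only [wdz, wdw, hcomp, ContinuousLinearMap.comp_apply, h0I, hD1, hD2,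
      ContinuousLinearMap.coe_fst', ContinuousLinearMap.coe_snd', Prod.smul_fst, Prod.smul_snd,
      smul_eq_mul, hhalf]
    rw [show fderiv ℝ f (H Z) (fderiv ℝ H Z (0, 1)) -
        I * fderiv ℝ f (H Z) ((I:ℂ) • fderiv ℝ H Z (0, 1)) =
        (fderiv ℝ f (H Z) (1,0) - I * fderiv ℝ f (H Z) (I,0)) * (fderiv ℝ H Z (0,1)).1
        + (fderiv ℝ f (H Z) (0,1) - I * fderiv ℝ f (H Z) (0,I)) * (fderiv ℝ H Z (0,1)).2
      from clm_key (fderiv ℝ f (H Z)) (fderiv ℝ H Z (0,1))]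
    ring

/-- **Transformation of the field `L` under a holomorphic change of coordinates**: if
`H : Ω → Ω'` is holomorphic with invertible Jacobian, `ρ = ρ* ∘ H`, and `L`, `L*` are the
operators built from `ρ` and `ρ*`, then for every smooth `u : Ω' → ℂ` and `Z ∈ Ω`,
`L(u ∘ H)(Z) = det H'(Z) · (L* u)(H Z)`. -/
theorem Lop_transformation_rule (Ω Ω' : Set (ℂ × ℂ)) (hΩ : IsOpen Ω) (hΩ' : IsOpen Ω')
    (H : ℂ × ℂ → ℂ × ℂ) (hH : DifferentiableOn ℂ H Ω) (hmaps : Set.MapsTo H Ω Ω')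
    (hJ : ∀ Z ∈ Ω, detJac H Z ≠ 0)
    (ρs : ℂ × ℂ → ℂ) (hρs : ContDiffOn ℝ (⊤ : ℕ∞) ρs Ω') (hreal : ∀ q ∈ Ω', (ρs q).im = 0)
    (u : ℂ × ℂ → ℂ) (hu : ContDiffOn ℝ (⊤ : ℕ∞) u Ω')
    (Z : ℂ × ℂ) (hZ : Z ∈ Ω) :
    Lop (fun q => ρs (H q)) (fun q => u (H q)) Z = detJac H Z * Lop ρs u (H Z) := by
  have hHa : DifferentiableAt ℂ H Z := hH.differentiableAt (hΩ.mem_nhds hZ)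
  have hmem : H Z ∈ Ω' := hmaps hZ
  have hρa : DifferentiableAt ℝ ρs (H Z) :=
    (hρs.contDiffAt (hΩ'.mem_nhds hmem)).differentiableAt (by simp)
  have hua : DifferentiableAt ℝ u (H Z) :=
    (hu.contDiffAt (hΩ'.mem_nhds hmem)).differentiableAt (by simp)
  obtain ⟨hρz, hρw⟩ := wd_comp H ρs Z hHa hρa
  obtain ⟨huz, huw⟩ := wd_comp H u Z hHa hua
  simp only [Lop, detJac, hρz, hρw, huz, huw]
  ring
end
end

section
/- Let ρ : Ω → ℝ be a smooth function on an open set Ω ⊂ ℂ², let p ∈ Ω with ρ(p) = 0 and dρ(p) ≠ 0, and let n ≥ 3. Then det D_n(ρ)(p) ≠ 0 if and only if J(ρ)(p) ≠ 0, where J(ρ) := det of the 3×3 bordered Hessian matrix [[ρ, ρ_z̄, ρ_w̄],[ρ_z, ρ_{zz̄}, ρ_{zw̄}],[ρ_w, ρ_{wz̄}, ρ_{ww̄}]] is Fefferman's Monge–Ampère operator, whose nonvanishing at p is the condition that the hypersurface {ρ = 0} is Levi-nondegenerate at p. -/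
noncomputable section

open Complex Matrix Set

/-- Fefferman's Monge–Ampère operator: the determinant of the bordered complex Hessian
`[[ρ, ρ_z̄, ρ_w̄], [ρ_z, ρ_{zz̄}, ρ_{zw̄}], [ρ_w, ρ_{wz̄}, ρ_{ww̄}]]`. -/
def Jfeff (ρ : ℂ × ℂ → ℂ) (p : ℂ × ℂ) : ℂ :=
  Matrix.det !![ρ p, wdzb ρ p, wdwb ρ p;
    wdz ρ p, wdzb (wdz ρ) p, wdwb (wdz ρ) p;
    wdw ρ p, wdzb (wdw ρ) p, wdwb (wdw ρ) p]

/-!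
Since `ρ` is real and `dρ(p) ≠ 0`, one of `ρ_z(p)`, `ρ_w(p)` is nonzero; swapping the roles of
`z` and `w` only reverses the rows of `D_n`, so say `ρ_w(p) ≠ 0`. Near `p` the row functions are
`ρ_z^k ρ_w^{n-k} = u v^k` with `u = ρ_w^n`, `v = ρ_z / ρ_w`. Expanding `v^k` in powers of
`h = v - v(p)` factors `D_n` as a unitriangular binomial matrix times `(L̄^j (u h^i)(p))_{i,j}`;
as `L̄` is a derivation and `h(p) = 0`, the latter is triangular with diagonal entries
`i! u(p) (L̄v(p))^i`. So for `n ≥ 1`, `det D_n(p) ≠ 0` iff `L̄v(p) ≠ 0`, and expanding `J(ρ)` along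
its first row with `ρ(p) = 0` gives `J(ρ)(p) = ρ_w L̄ρ_z - ρ_z L̄ρ_w = ρ_w² L̄v` at `p`.
-/

open Filter Topology

lemma ContDiffAt.fderiv_apply_const {E F : Type*} [NormedAddCommGroup E] [NormedSpace ℝ E]
    [NormedAddCommGroup F] [NormedSpace ℝ F] {f : E → F} {x : E}
    (hf : ContDiffAt ℝ (⊤ : ℕ∞) f x) (v : E) :
    ContDiffAt ℝ (⊤ : ℕ∞) (fun y => fderiv ℝ f y v) x :=
  (hf.fderiv_right (by simp)).clm_apply contDiffAt_const

section Calculus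

variable {ρ f g : ℂ × ℂ → ℂ} {q : ℂ × ℂ}

lemma ContDiffAt.wdz (hf : ContDiffAt ℝ (⊤ : ℕ∞) f q) : ContDiffAt ℝ (⊤ : ℕ∞) (wdz f) q :=
  ((hf.fderiv_apply_const _).sub (contDiffAt_const.mul (hf.fderiv_apply_const _))).div_const 2

lemma ContDiffAt.wdzb (hf : ContDiffAt ℝ (⊤ : ℕ∞) f q) : ContDiffAt ℝ (⊤ : ℕ∞) (wdzb f) q :=
  ((hf.fderiv_apply_const _).add (contDiffAt_const.mul (hf.fderiv_apply_const _))).div_const 2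

lemma ContDiffAt.wdw (hf : ContDiffAt ℝ (⊤ : ℕ∞) f q) : ContDiffAt ℝ (⊤ : ℕ∞) (wdw f) q :=
  ((hf.fderiv_apply_const _).sub (contDiffAt_const.mul (hf.fderiv_apply_const _))).div_const 2

lemma ContDiffAt.wdwb (hf : ContDiffAt ℝ (⊤ : ℕ∞) f q) : ContDiffAt ℝ (⊤ : ℕ∞) (wdwb f) q :=
  ((hf.fderiv_apply_const _).add (contDiffAt_const.mul (hf.fderiv_apply_const _))).div_const 2

lemma ContDiffAt.lbar (hρ : ContDiffAt ℝ (⊤ : ℕ∞) ρ q) (hf : ContDiffAt ℝ (⊤ : ℕ∞) f q) :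
    ContDiffAt ℝ (⊤ : ℕ∞) (Lbar ρ f) q :=
  (hρ.wdwb.neg.mul hf.wdzb).add (hρ.wdzb.mul hf.wdwb)

lemma lbar_mul (hf : DifferentiableAt ℝ f q) (hg : DifferentiableAt ℝ g q) :
    Lbar ρ (fun x => f x * g x) q = f q * Lbar ρ g q + g q * Lbar ρ f q := by
  simp only [Lbar, wdzb, wdwb, fderiv_fun_mul hf hg, _root_.add_apply, _root_.smul_apply,
    smul_eq_mul]
  ring

lemma lbar_pow_succ (hf : DifferentiableAt ℝ f q) (m : ℕ) :
    Lbar ρ (fun x => f x ^ (m + 1)) q = (m + 1) * f q ^ m * Lbar ρ f q := by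
  simp only [Lbar, wdzb, wdwb, fderiv_fun_pow (m + 1) hf, _root_.smul_apply, nsmul_eq_mul,
    smul_eq_mul, add_tsub_cancel_right]
  push_cast
  ring

lemma lbar_sub_const (c : ℂ) : Lbar ρ (fun x => f x - c) = Lbar ρ f := by
  funext x
  simp only [Lbar, wdzb, wdwb, fderiv_sub_const]

lemma lbar_sum {ι : Type*} (s : Finset ι) (e : ι → ℂ) {g : ι → ℂ × ℂ → ℂ}
    (hg : ∀ i ∈ s, DifferentiableAt ℝ (g i) q) :
    Lbar ρ (fun x => ∑ i ∈ s, e i * g i x) q = ∑ i ∈ s, e i * Lbar ρ (g i) q := by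
  have hfd : fderiv ℝ (fun x => ∑ i ∈ s, e i * g i x) q = ∑ i ∈ s, e i • fderiv ℝ (g i) q := by
    rw [fderiv_fun_sum fun i hi => (hg i hi).const_mul (e i)]
    exact Finset.sum_congr rfl fun i hi => fderiv_const_mul (hg i hi) (e i)
  simp only [Lbar, wdzb, wdwb, hfd, _root_.sum_apply,
    _root_.smul_apply, smul_eq_mul, Finset.mul_sum, ← Finset.sum_add_distrib,
    Finset.sum_div]
  exact Finset.sum_congr rfl fun i _ => by ring

lemma lbar_congr {p : ℂ × ℂ} (h : f =ᶠ[𝓝 p] g) : Lbar ρ f =ᶠ[𝓝 p] Lbar ρ g :=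
  (h.fderiv (𝕜 := ℝ)).mono fun x hx => by simp only [Lbar, wdzb, wdwb, hx]

lemma iterate_lbar_congr {p : ℂ × ℂ} (h : f =ᶠ[𝓝 p] g) (j : ℕ) :
    (Lbar ρ)^[j] f =ᶠ[𝓝 p] (Lbar ρ)^[j] g := by
  induction j generalizing f g with
  | zero => exact h
  | succ j ih => exact ih (lbar_congr h)

end Calculus

section Germs

/-- Unlike `ContDiffAt ℝ ∞ f p`, this is preserved by `wdz`, `wdw` and `Lbar ρ`. -/
def SmoothNear (p : ℂ × ℂ) (f : ℂ × ℂ → ℂ) : Prop :=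
  ∀ᶠ q in 𝓝 p, ContDiffAt ℝ (⊤ : ℕ∞) f q

variable {p : ℂ × ℂ} {ρ f g h ψ : ℂ × ℂ → ℂ}

namespace SmoothNear

lemma eventually_differentiableAt (hf : SmoothNear p f) :
    ∀ᶠ q in 𝓝 p, DifferentiableAt ℝ f q :=
  hf.mono fun _ h => h.differentiableAt (by simp)

lemma differentiableAt (hf : SmoothNear p f) : DifferentiableAt ℝ f p :=
  hf.eventually_differentiableAt.self_of_nhds

lemma wdz (hf : SmoothNear p f) : SmoothNear p (wdz f) := hf.mono fun _ h => h.wdz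

lemma wdw (hf : SmoothNear p f) : SmoothNear p (wdw f) := hf.mono fun _ h => h.wdw

lemma lbar (hρ : SmoothNear p ρ) (hf : SmoothNear p f) : SmoothNear p (Lbar ρ f) := by
  filter_upwards [hρ, hf] with q h1 h2 using h1.lbar h2

lemma mul (hf : SmoothNear p f) (hg : SmoothNear p g) : SmoothNear p (fun x => f x * g x) := by
  filter_upwards [hf, hg] with q h1 h2 using h1.mul h2

lemma add (hf : SmoothNear p f) (hg : SmoothNear p g) : SmoothNear p (fun x => f x + g x) := by
  filter_upwards [hf, hg] with q h1 h2 using h1.add h2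

lemma const_mul (c : ℂ) (hf : SmoothNear p f) : SmoothNear p (fun x => c * f x) :=
  hf.mono fun _ h => contDiffAt_const.mul h

lemma sub_const (hf : SmoothNear p f) (c : ℂ) : SmoothNear p (fun x => f x - c) :=
  hf.mono fun _ h => h.sub contDiffAt_const

lemma pow (hf : SmoothNear p f) (k : ℕ) : SmoothNear p (fun x => f x ^ k) :=
  hf.mono fun _ h => h.pow k

lemma div (hf : SmoothNear p f) (hg : SmoothNear p g) (hgp : g p ≠ 0) :
    SmoothNear p (fun x => f x / g x) := by
  filter_upwards [hf, hg, hg.differentiableAt.continuousAt.eventually_ne hgp]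
    with q h1 h2 h3
  simpa only [div_eq_mul_inv, Pi.inv_apply] using h1.mul (h2.inv h3)

end SmoothNear

lemma iterate_lbar_sum (hρ : SmoothNear p ρ) {ι : Type*} (s : Finset ι) (e : ι → ℂ)
    {g : ι → ℂ × ℂ → ℂ} (hg : ∀ i ∈ s, SmoothNear p (g i)) (j : ℕ) :
    (Lbar ρ)^[j] (fun x => ∑ i ∈ s, e i * g i x) p = ∑ i ∈ s, e i * (Lbar ρ)^[j] (g i) p := by
  induction j generalizing g with
  | zero => rfl
  | succ j ih =>
    have hL : Lbar ρ (fun x => ∑ i ∈ s, e i * g i x) =ᶠ[𝓝 p]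
        fun x => ∑ i ∈ s, e i * Lbar ρ (g i) x := by
      filter_upwards [(s.eventually_all).2 fun i hi => (hg i hi).eventually_differentiableAt]
        with q hq using lbar_sum s e hq
    rw [Function.iterate_succ_apply, (iterate_lbar_congr hL j).self_of_nhds]
    exact ih fun i hi => hρ.lbar (hg i hi)

lemma lbar_mul_pow_succ (hψ : SmoothNear p ψ) (hh : SmoothNear p h) (m : ℕ) :
    Lbar ρ (fun x => ψ x * h x ^ (m + 1)) =ᶠ[𝓝 p]
      fun x => ((m + 1) * ψ x * Lbar ρ h x + h x * Lbar ρ ψ x) * h x ^ m := by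
  filter_upwards [hψ.eventually_differentiableAt, hh.eventually_differentiableAt]
    with q hψq hhq
  rw [lbar_mul hψq (hhq.fun_pow (m + 1)), lbar_pow_succ hhq]
  ring

lemma SmoothNear.lbar_mul_pow_succ_coeff (hρ : SmoothNear p ρ) (hψ : SmoothNear p ψ)
    (hh : SmoothNear p h) (m : ℕ) :
    SmoothNear p (fun x => (m + 1) * ψ x * Lbar ρ h x + h x * Lbar ρ ψ x) :=
  ((hψ.const_mul _).mul (hρ.lbar hh)).add (hh.mul (hρ.lbar hψ))

lemma iterate_lbar_mul_pow_of_lt (hρ : SmoothNear p ρ) (hh : SmoothNear p h) (hh0 : h p = 0)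
    {j i : ℕ} (hji : j < i) (hψ : SmoothNear p ψ) :
    (Lbar ρ)^[j] (fun x => ψ x * h x ^ i) p = 0 := by
  induction j generalizing i ψ with
  | zero => simp [hh0, zero_pow (Nat.pos_iff_ne_zero.mp hji)]
  | succ j ih =>
    obtain ⟨m, rfl⟩ : ∃ m, i = m + 1 := ⟨i - 1, by omega⟩
    rw [Function.iterate_succ_apply,
      (iterate_lbar_congr (lbar_mul_pow_succ hψ hh m) j).self_of_nhds]
    exact ih (by omega) (hρ.lbar_mul_pow_succ_coeff hψ hh m)

lemma iterate_lbar_mul_pow_self (hρ : SmoothNear p ρ) (hh : SmoothNear p h) (hh0 : h p = 0)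
    (i : ℕ) (hψ : SmoothNear p ψ) :
    (Lbar ρ)^[i] (fun x => ψ x * h x ^ i) p = i.factorial * ψ p * Lbar ρ h p ^ i := by
  induction i generalizing ψ with
  | zero => simp
  | succ i ih =>
    rw [Function.iterate_succ_apply,
      (iterate_lbar_congr (lbar_mul_pow_succ hψ hh i) i).self_of_nhds,
      ih (hρ.lbar_mul_pow_succ_coeff hψ hh i), hh0, Nat.factorial_succ]
    push_cast
    ring

end Germs

section Matrices

open Matrix

lemma pow_eq_sum_choose_mul_sub_pow {R : Type*} [CommRing R] {k n : ℕ} (hk : k ≤ n) (x c : R) :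
    x ^ k = ∑ i : Fin (n + 1), (k.choose i : R) * c ^ (k - i) * (x - c) ^ (i : ℕ) := by
  rw [Fin.sum_univ_eq_sum_range (fun i => (k.choose i : R) * c ^ (k - i) * (x - c) ^ i),
    ← Finset.sum_subset (Finset.range_subset_range.mpr (by omega : k + 1 ≤ n + 1))]
  · conv_lhs => rw [← sub_add_cancel x c, add_pow]
    exact Finset.sum_congr rfl fun i _ => by ring
  · intro i _ hi
    rw [Nat.choose_eq_zero_of_lt (by simpa using hi), Nat.cast_zero, zero_mul, zero_mul]

lemma det_choose_mul_pow {R : Type*} [CommRing R] (n : ℕ) (c : R) :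
    (of fun k i : Fin (n + 1) => ((k : ℕ).choose i : R) * c ^ ((k : ℕ) - i)).det = 1 := by
  rw [det_of_isLowerTriangular _ fun k i hki => by
    simp [Nat.choose_eq_zero_of_lt (Fin.lt_def.mp (OrderDual.toDual_lt_toDual.mp hki))]]
  simp

def lbarMatrix {n : ℕ} (ρ : ℂ × ℂ → ℂ) (f : Fin n → ℂ × ℂ → ℂ) (p : ℂ × ℂ) :
    Matrix (Fin n) (Fin n) ℂ :=
  of fun k j => (Lbar ρ)^[(j : ℕ)] (f k) p

variable {n : ℕ} {p : ℂ × ℂ} {ρ u v : ℂ × ℂ → ℂ}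

lemma lbarMatrix_congr {f g : Fin n → ℂ × ℂ → ℂ} (h : ∀ k, f k =ᶠ[𝓝 p] g k) :
    lbarMatrix ρ f p = lbarMatrix ρ g p :=
  ext fun k j => (iterate_lbar_congr (h k) j).self_of_nhds

lemma lbarMatrix_mul_pow_eq_mul (hρ : SmoothNear p ρ) (hu : SmoothNear p u)
    (hv : SmoothNear p v) :
    lbarMatrix ρ (fun (k : Fin (n + 1)) x => u x * v x ^ (k : ℕ)) p =
      of (fun k i : Fin (n + 1) => ((k : ℕ).choose i : ℂ) * v p ^ ((k : ℕ) - i)) *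
        lbarMatrix ρ (fun i x => u x * (v x - v p) ^ (i : ℕ)) p := by
  ext k j
  have hexp : (fun x => u x * v x ^ (k : ℕ)) = fun x => ∑ i : Fin (n + 1),
      ((k : ℕ).choose i : ℂ) * v p ^ ((k : ℕ) - i) * (u x * (v x - v p) ^ (i : ℕ)) := by
    funext x
    rw [pow_eq_sum_choose_mul_sub_pow (Nat.lt_succ_iff.mp k.isLt) (v x) (v p), Finset.mul_sum]
    exact Finset.sum_congr rfl fun i _ => by ring
  simp only [lbarMatrix, mul_apply, of_apply, hexp]
  exact iterate_lbar_sum hρ _ _ (fun i _ => hu.mul ((hv.sub_const _).pow _)) j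

lemma det_lbarMatrix_mul_pow (hρ : SmoothNear p ρ) (hu : SmoothNear p u)
    (hv : SmoothNear p v) :
    (lbarMatrix ρ (fun (k : Fin (n + 1)) x => u x * v x ^ (k : ℕ)) p).det =
      ∏ i : Fin (n + 1), (i : ℕ).factorial * u p * Lbar ρ v p ^ (i : ℕ) := by
  have hh := hv.sub_const (v p)
  have hh0 : v p - v p = 0 := sub_self _
  have hN :
      (lbarMatrix ρ (fun (i : Fin (n + 1)) x => u x * (v x - v p) ^ (i : ℕ)) p).IsUpperTriangular :=
    fun i j hji => iterate_lbar_mul_pow_of_lt hρ hh hh0 (Fin.lt_def.mp hji) hu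
  rw [lbarMatrix_mul_pow_eq_mul hρ hu hv, det_mul, det_choose_mul_pow, one_mul,
    det_of_isUpperTriangular hN]
  refine Finset.prod_congr rfl fun i _ => ?_
  rw [lbarMatrix, of_apply, iterate_lbar_mul_pow_self hρ hh hh0 _ hu, lbar_sub_const]

end Matrices

section BinaryForms

open Matrix

variable {n : ℕ} {p : ℂ × ℂ} {ρ a b : ℂ × ℂ → ℂ}

lemma sq_mul_lbar_div (ha : SmoothNear p a) (hb : SmoothNear p b) (hbp : b p ≠ 0) :
    b p ^ 2 * Lbar ρ (fun x => a x / b x) p = b p * Lbar ρ a p - a p * Lbar ρ b p := by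
  have hquot : (fun x => a x / b x * b x) =ᶠ[𝓝 p] a := by
    filter_upwards [hb.differentiableAt.continuousAt.eventually_ne hbp] with x hx
    exact div_mul_cancel₀ _ hx
  rw [← (lbar_congr hquot).self_of_nhds, lbar_mul (ha.div hb hbp).differentiableAt
    hb.differentiableAt]
  field_simp
  ring

lemma det_lbarMatrix_pow_mul_pow_ne_zero_iff (hρ : SmoothNear p ρ) (ha : SmoothNear p a)
    (hb : SmoothNear p b) (hbp : b p ≠ 0) (hn : n ≠ 0) :
    (lbarMatrix ρ (fun (k : Fin (n + 1)) x => a x ^ (k : ℕ) * b x ^ (n - k)) p).det ≠ 0 ↔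
      b p * Lbar ρ a p - a p * Lbar ρ b p ≠ 0 := by
  have hform : ∀ k : Fin (n + 1), (fun x => a x ^ (k : ℕ) * b x ^ (n - k)) =ᶠ[𝓝 p]
      fun x => b x ^ n * (a x / b x) ^ (k : ℕ) := fun k => by
    filter_upwards [hb.differentiableAt.continuousAt.eventually_ne hbp] with x hx
    rw [div_pow, ← mul_div_assoc, eq_div_iff (pow_ne_zero _ hx), mul_assoc, ← pow_add,
      Nat.sub_add_cancel (Nat.lt_succ_iff.mp k.isLt), mul_comm]
  rw [lbarMatrix_congr hform, det_lbarMatrix_mul_pow hρ (hb.pow n) (ha.div hb hbp),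
    ← sq_mul_lbar_div ha hb hbp, Finset.prod_ne_zero_iff]
  constructor
  · intro h
    have h1 := h ⟨1, by omega⟩ (Finset.mem_univ _)
    simp only [pow_one] at h1
    exact mul_ne_zero (pow_ne_zero 2 hbp) (right_ne_zero_of_mul h1)
  · intro h i _
    exact mul_ne_zero (mul_ne_zero (by exact_mod_cast i.val.factorial_ne_zero)
      (pow_ne_zero n hbp)) (pow_ne_zero _ (right_ne_zero_of_mul h))

lemma lbarMatrix_pow_mul_pow_eq_submatrix_rev :
    lbarMatrix ρ (fun (k : Fin (n + 1)) x => a x ^ (k : ℕ) * b x ^ (n - k)) p =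
      (lbarMatrix ρ (fun (k : Fin (n + 1)) x => b x ^ (k : ℕ) * a x ^ (n - k)) p).submatrix
        Fin.revPerm id := by
  ext k j
  have hk : (Fin.rev k : ℕ) = n - k := by rw [Fin.val_rev]; omega
  simp only [lbarMatrix, submatrix_apply, of_apply, Fin.revPerm_apply, id_eq, hk,
    Nat.sub_sub_self (Nat.lt_succ_iff.mp k.isLt), mul_comm]

lemma det_lbarMatrix_pow_mul_pow_ne_zero_iff_swap :
    (lbarMatrix ρ (fun (k : Fin (n + 1)) x => a x ^ (k : ℕ) * b x ^ (n - k)) p).det ≠ 0 ↔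
      (lbarMatrix ρ (fun (k : Fin (n + 1)) x => b x ^ (k : ℕ) * a x ^ (n - k)) p).det ≠ 0 := by
  rw [lbarMatrix_pow_mul_pow_eq_submatrix_rev, det_permute, mul_ne_zero_iff,
    and_iff_right (Int.cast_ne_zero.mpr (Units.ne_zero _))]

lemma Jfeff_eq_of_eq_zero (hp0 : ρ p = 0) :
    Jfeff ρ p = wdw ρ p * Lbar ρ (wdz ρ) p - wdz ρ p * Lbar ρ (wdw ρ) p := by
  simp only [Jfeff, det_fin_three, of_apply, cons_val', cons_val_zero, cons_val_one,
    cons_val_fin_one, cons_val, hp0, zero_mul, sub_self, zero_sub, Lbar]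
  ring

end BinaryForms

lemma im_fderiv_apply_eq_zero {ρ : ℂ × ℂ → ℂ} {p : ℂ × ℂ} (hρ : DifferentiableAt ℝ ρ p)
    (hreal : ∀ᶠ q in 𝓝 p, (ρ q).im = 0) (v : ℂ × ℂ) : (fderiv ℝ ρ p v).im = 0 := by
  have hcomp : fderiv ℝ (fun q => (ρ q).im) p = Complex.imCLM.comp (fderiv ℝ ρ p) :=
    (Complex.imCLM.hasFDerivAt.comp p hρ.hasFDerivAt).fderiv
  have hzero : fderiv ℝ (fun q => (ρ q).im) p = 0 := by
    rw [Filter.EventuallyEq.fderiv_eq (f := fun _ => (0 : ℝ)) hreal, fderiv_const_apply]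
  simpa using congrArg (fun L : (ℂ × ℂ) →L[ℝ] ℝ => L v) (hcomp.symm.trans hzero)

lemma wdz_ne_zero_or_wdw_ne_zero {ρ : ℂ × ℂ → ℂ} {p : ℂ × ℂ} (hρ : DifferentiableAt ℝ ρ p)
    (hreal : ∀ᶠ q in 𝓝 p, (ρ q).im = 0) (hdρ : fderiv ℝ ρ p ≠ 0) :
    wdz ρ p ≠ 0 ∨ wdw ρ p ≠ 0 := by
  have hsplit : ∀ x y : ℂ × ℂ, (fderiv ℝ ρ p x - I * fderiv ℝ ρ p y) / 2 = 0 →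
      fderiv ℝ ρ p x = 0 ∧ fderiv ℝ ρ p y = 0 := fun x y hxy => by
    have hx := im_fderiv_apply_eq_zero hρ hreal x
    have hy := im_fderiv_apply_eq_zero hρ hreal y
    simpa [Complex.ext_iff, hx, hy] using hxy
  by_contra! h
  obtain ⟨h10, hI0⟩ := hsplit _ _ h.1
  obtain ⟨h01, h0I⟩ := hsplit _ _ h.2
  refine hdρ (ContinuousLinearMap.coe_injective
    ((Complex.basisOneI.prod Complex.basisOneI).ext fun i => ?_))
  rcases i with i | i <;> fin_cases i <;> simpa

/-- **Proposition 3.1**: for a smooth real hypersurface `{ρ = 0}` and `n ≥ 3`,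
`det Dₙ(ρ)(p) ≠ 0` if and only if Fefferman's Monge–Ampère operator `J(ρ)` is nonzero at `p`,
i.e. iff the hypersurface is Levi-nondegenerate at `p`. -/
theorem detD_ne_zero_iff_levi_nondegenerate (n : ℕ) (hn : 3 ≤ n)
    (Ω : Set (ℂ × ℂ)) (hΩ : IsOpen Ω)
    (ρ : ℂ × ℂ → ℂ) (hρ : ContDiffOn ℝ (⊤ : ℕ∞) ρ Ω) (hρreal : ∀ q ∈ Ω, (ρ q).im = 0)
    (p : ℂ × ℂ) (hp : p ∈ Ω) (hp0 : ρ p = 0) (hdρ : fderiv ℝ ρ p ≠ 0) :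
    (matD ρ n p).det ≠ 0 ↔ Jfeff ρ p ≠ 0 := by
  have hρS : SmoothNear p ρ := by
    filter_upwards [hΩ.mem_nhds hp] with q hq using hρ.contDiffAt (hΩ.mem_nhds hq)
  have hreal : ∀ᶠ q in 𝓝 p, (ρ q).im = 0 := eventually_of_mem (hΩ.mem_nhds hp) hρreal
  have hn0 : n ≠ 0 := by omega
  change (lbarMatrix ρ (fun (k : Fin (n + 1)) x => wdz ρ x ^ (k : ℕ) * wdw ρ x ^ (n - k)) p).det
    ≠ 0 ↔ _
  rw [Jfeff_eq_of_eq_zero hp0]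
  rcases wdz_ne_zero_or_wdw_ne_zero hρS.differentiableAt hreal hdρ with hz | hw
  · rw [det_lbarMatrix_pow_mul_pow_ne_zero_iff_swap,
      det_lbarMatrix_pow_mul_pow_ne_zero_iff hρS hρS.wdw hρS.wdz hz hn0, ← neg_sub, neg_ne_zero]
  · exact det_lbarMatrix_pow_mul_pow_ne_zero_iff hρS hρS.wdz hρS.wdw hw hn0
end
end

section
/- Let R be a polynomial on ℂ² homogeneous of bidegree (p,q). Then Q⁰(R) is a homogeneous polynomial of bidegree (p+2, q−2) (interpreted as 0 when q < 2); moreover Q⁰(R) = 0 whenever p ≤ 1 or q ≤ 1. -/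
noncomputable section

open Complex Matrix Set

/-- The operator `L̄₀ := -w ∂_z̄ + z ∂_w̄` (the operator `L̄` of the sphere). -/
def Lbar0 (f : ℂ × ℂ → ℂ) : ℂ × ℂ → ℂ :=
  fun p => -p.2 * wdzb f p + p.1 * wdwb f p

/-- `Q⁰(R) := L̄₀⁴ ( w̄² R_zz - 2 z̄ w̄ R_zw + z̄² R_ww )`. -/
def Q0 (R : ℂ × ℂ → ℂ) : ℂ × ℂ → ℂ :=
  Lbar0^[4] (fun p => (starRingEnd ℂ p.2) ^ 2 * wdz (wdz R) p
    - 2 * starRingEnd ℂ p.1 * starRingEnd ℂ p.2 * wdw (wdz R) p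
    + (starRingEnd ℂ p.1) ^ 2 * wdw (wdw R) p)

/-- `R` is a homogeneous polynomial of bidegree `(p, q)` on `ℂ²`: a linear combination of
the monomials `z^{α₁} w^{α₂} z̄^{β₁} w̄^{β₂}` with `α₁ + α₂ = p` and `β₁ + β₂ = q`. -/
def IsBihom (R : ℂ × ℂ → ℂ) (p q : ℕ) : Prop :=
  ∃ c : Fin (p + 1) → Fin (q + 1) → ℂ, ∀ z w : ℂ,
    R (z, w) = ∑ a : Fin (p + 1), ∑ b : Fin (q + 1),
      c a b * z ^ (a : ℕ) * w ^ (p - (a : ℕ)) *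
        (starRingEnd ℂ z) ^ (b : ℕ) * (starRingEnd ℂ w) ^ (q - (b : ℕ))

/-!
Write `R` as the evaluation of a polynomial `φ` in four variables at the real-linear coordinates
`(z, w, z̄, w̄)`, graded by bidegree in `ℤ × ℤ`. By the chain rule, evaluation turns formal partial
derivatives into Wirtinger derivatives, so `Q⁰(R)` is the evaluation of `L̄₀⁴ L₀² φ`, where
`L₀ = -w̄ ∂_z + z̄ ∂_w`: since `∂_z, ∂_w` kill the coefficients of `L₀`, the second-order expression
`w̄² R_zz - 2 z̄ w̄ R_zw + z̄² R_ww` is exactly `L₀² R`. Now `L₀` shifts the bidegree by `(-1, 1)`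
and `L̄₀` by `(1, -1)`, and a bihomogeneous polynomial of a bidegree with a negative entry is zero;
so `L₀² φ = 0` if `p ≤ 1`, and `L̄₀⁴ L₀² φ = 0` if `q ≤ 1`.
-/

open MvPolynomial

theorem MvPolynomial.pderiv_pderiv_comm {R σ : Type*} [CommSemiring R] (i j : σ)
    (φ : MvPolynomial σ R) : pderiv i (pderiv j φ) = pderiv j (pderiv i φ) := by
  classical
  induction φ using MvPolynomial.induction_on with
  | C a => simp
  | add p q hp hq => simp [hp, hq]
  | mul_X p k hp =>
    simp only [pderiv_mul, map_add, pderiv_X, hp, Pi.single_apply, mul_ite, mul_one, mul_zero]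
    split_ifs <;> simp_all [add_comm]

theorem MvPolynomial.IsWeightedHomogeneous.X_mul_pderiv {R σ M : Type*} [CommSemiring R]
    [AddCommGroup M] {w : σ → M} {φ : MvPolynomial σ R} {m : M}
    (h : IsWeightedHomogeneous w φ m) (j i : σ) :
    IsWeightedHomogeneous w (X j * pderiv i φ) (m + (w j - w i)) := by
  convert (isWeightedHomogeneous_X R w j).mul (h.pderiv (sub_add_cancel m (w i))) using 1
  abel

theorem MvPolynomial.IsWeightedHomogeneous.eq_zero_of_not_nonneg {R σ M : Type*}
    [CommSemiring R] [AddCommMonoid M] [PartialOrder M] [IsOrderedAddMonoid M]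
    {w : σ → M} {φ : MvPolynomial σ R} {m : M} (hw : ∀ i, 0 ≤ w i)
    (h : IsWeightedHomogeneous w φ m) (hm : ¬ 0 ≤ m) : φ = 0 :=
  h.eq_zero_of_no_monomials fun _ hd =>
    hm (hd ▸ Finsupp.sum_nonneg fun i _ => nsmul_nonneg (hw i) _)

theorem MvPolynomial.hasFDerivAt_aeval {𝕜 E 𝔸 R σ : Type*} [NontriviallyNormedField 𝕜]
    [NormedAddCommGroup E] [NormedSpace 𝕜 E] [NormedCommRing 𝔸] [NormedAlgebra 𝕜 𝔸]
    [CommSemiring R] [Algebra R 𝔸] [Fintype σ] {g : σ → E → 𝔸} {g' : σ → E →L[𝕜] 𝔸} {x : E}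
    (hg : ∀ i, HasFDerivAt (g i) (g' i) x) (φ : MvPolynomial σ R) :
    HasFDerivAt (aeval g φ) (∑ i, aeval g (pderiv i φ) x • g' i) x := by
  classical
  induction φ using MvPolynomial.induction_on with
  | C a =>
    rw [aeval_C]
    refine (hasFDerivAt_const (𝕜 := 𝕜) (algebraMap R 𝔸 a) x).congr_fderiv ?_
    ext; simp
  | add p q hp hq =>
    rw [map_add]
    refine (hp.add hq).congr_fderiv ?_
    ext; simp [add_mul, Finset.sum_add_distrib]
  | mul_X p j hp =>
    rw [map_mul, aeval_X]
    refine (hp.mul (hg j)).congr_fderiv ?_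
    ext
    simp [pderiv_X, Pi.single_apply, apply_ite (f := aeval g), ite_apply, mul_add,
      Finset.sum_add_distrib, Finset.mul_sum, mul_comm, mul_left_comm]

/-- The coordinates `z, w, z̄, w̄`: below, the variables `X 0, X 1, X 2, X 3` stand for them. -/
def zzbarCoord : Fin 4 → ℂ × ℂ →L[ℝ] ℂ :=
  ![ContinuousLinearMap.fst ℝ ℂ ℂ, ContinuousLinearMap.snd ℝ ℂ ℂ,
    conjCLE.toContinuousLinearMap ∘L ContinuousLinearMap.fst ℝ ℂ ℂ,
    conjCLE.toContinuousLinearMap ∘L ContinuousLinearMap.snd ℝ ℂ ℂ]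

def evalZZbar : MvPolynomial (Fin 4) ℂ →ₐ[ℂ] (ℂ × ℂ → ℂ) :=
  aeval fun i => zzbarCoord i

@[simp] lemma evalZZbar_X (i : Fin 4) : evalZZbar (X i) = zzbarCoord i := aeval_X _ _

lemma fderiv_evalZZbar_apply (φ : MvPolynomial (Fin 4) ℂ) (Z v : ℂ × ℂ) :
    fderiv ℝ (evalZZbar φ) Z v =
      evalZZbar (pderiv 0 φ) Z * v.1 + evalZZbar (pderiv 1 φ) Z * v.2
        + evalZZbar (pderiv 2 φ) Z * starRingEnd ℂ v.1
        + evalZZbar (pderiv 3 φ) Z * starRingEnd ℂ v.2 := by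
  have h : HasFDerivAt (evalZZbar φ) (∑ i, evalZZbar (pderiv i φ) Z • zzbarCoord i) Z :=
    hasFDerivAt_aeval (fun i => (zzbarCoord i).hasFDerivAt) φ
  simp [h.fderiv, Fin.sum_univ_four, zzbarCoord, add_assoc]

lemma wdz_evalZZbar (φ : MvPolynomial (Fin 4) ℂ) :
    wdz (evalZZbar φ) = evalZZbar (pderiv 0 φ) := by
  ext Z
  simp only [wdz, fderiv_evalZZbar_apply, map_one, map_zero, conj_I]
  ring_nf; rw [I_sq]; ring

lemma wdw_evalZZbar (φ : MvPolynomial (Fin 4) ℂ) :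
    wdw (evalZZbar φ) = evalZZbar (pderiv 1 φ) := by
  ext Z
  simp only [wdw, fderiv_evalZZbar_apply, map_one, map_zero, conj_I]
  ring_nf; rw [I_sq]; ring

lemma wdzb_evalZZbar (φ : MvPolynomial (Fin 4) ℂ) :
    wdzb (evalZZbar φ) = evalZZbar (pderiv 2 φ) := by
  ext Z
  simp only [wdzb, fderiv_evalZZbar_apply, map_one, map_zero, conj_I]
  ring_nf; rw [I_sq]; ring

lemma wdwb_evalZZbar (φ : MvPolynomial (Fin 4) ℂ) :
    wdwb (evalZZbar φ) = evalZZbar (pderiv 3 φ) := by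
  ext Z
  simp only [wdwb, fderiv_evalZZbar_apply, map_one, map_zero, conj_I]
  ring_nf; rw [I_sq]; ring

def l0Poly (φ : MvPolynomial (Fin 4) ℂ) : MvPolynomial (Fin 4) ℂ :=
  -X 3 * pderiv 0 φ + X 2 * pderiv 1 φ

def lbar0Poly (φ : MvPolynomial (Fin 4) ℂ) : MvPolynomial (Fin 4) ℂ :=
  -X 1 * pderiv 2 φ + X 0 * pderiv 3 φ

def q0Poly (φ : MvPolynomial (Fin 4) ℂ) : MvPolynomial (Fin 4) ℂ :=
  lbar0Poly^[4] (l0Poly (l0Poly φ))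

lemma lbar0Poly_zero : lbar0Poly 0 = 0 := by simp [lbar0Poly]

lemma evalZZbar_lbar0Poly (φ : MvPolynomial (Fin 4) ℂ) :
    evalZZbar (lbar0Poly φ) = Lbar0 (evalZZbar φ) := by
  ext Z
  simp [lbar0Poly, Lbar0, wdzb_evalZZbar, wdwb_evalZZbar, zzbarCoord]

lemma l0Poly_l0Poly (φ : MvPolynomial (Fin 4) ℂ) :
    l0Poly (l0Poly φ) = X 3 ^ 2 * pderiv 0 (pderiv 0 φ) - 2 * X 2 * X 3 * pderiv 1 (pderiv 0 φ)
      + X 2 ^ 2 * pderiv 1 (pderiv 1 φ) := by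
  simp only [l0Poly, map_add, map_neg, Derivation.leibniz, smul_eq_mul, ne_eq, Fin.reduceEq,
    not_false_eq_true, pderiv_X_of_ne, mul_zero, add_zero, pderiv_pderiv_comm (0 : Fin 4) 1 φ]
  ring

lemma evalZZbar_l0Poly_l0Poly (φ : MvPolynomial (Fin 4) ℂ) :
    evalZZbar (l0Poly (l0Poly φ)) = fun p => (starRingEnd ℂ p.2) ^ 2 * wdz (wdz (evalZZbar φ)) p
      - 2 * starRingEnd ℂ p.1 * starRingEnd ℂ p.2 * wdw (wdz (evalZZbar φ)) p
      + (starRingEnd ℂ p.1) ^ 2 * wdw (wdw (evalZZbar φ)) p := by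
  ext Z
  simp [l0Poly_l0Poly, wdz_evalZZbar, wdw_evalZZbar, zzbarCoord, map_ofNat]

lemma Q0_evalZZbar (φ : MvPolynomial (Fin 4) ℂ) : Q0 (evalZZbar φ) = evalZZbar (q0Poly φ) := by
  have hL : Function.Semiconj evalZZbar lbar0Poly Lbar0 := evalZZbar_lbar0Poly
  rw [q0Poly, hL.iterate_right 4, evalZZbar_l0Poly_l0Poly, Q0]

def bideg : Fin 4 → ℤ × ℤ := ![(1, 0), (1, 0), (0, 1), (0, 1)]

section Bidegree

variable {φ : MvPolynomial (Fin 4) ℂ}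

lemma isWeightedHomogeneous_l0Poly {m : ℤ × ℤ} (h : IsWeightedHomogeneous bideg φ m) :
    IsWeightedHomogeneous bideg (l0Poly φ) (m + (-1, 1)) := by
  rw [l0Poly, neg_mul]
  exact (h.X_mul_pderiv 3 0).neg.add (h.X_mul_pderiv 2 1)

lemma isWeightedHomogeneous_lbar0Poly {m : ℤ × ℤ} (h : IsWeightedHomogeneous bideg φ m) :
    IsWeightedHomogeneous bideg (lbar0Poly φ) (m + (1, -1)) := by
  rw [lbar0Poly, neg_mul]
  exact (h.X_mul_pderiv 1 2).neg.add (h.X_mul_pderiv 0 3)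

lemma isWeightedHomogeneous_q0Poly {m : ℤ × ℤ} (h : IsWeightedHomogeneous bideg φ m) :
    IsWeightedHomogeneous bideg (q0Poly φ) (m + (2, -2)) := by
  have h' := isWeightedHomogeneous_lbar0Poly <| isWeightedHomogeneous_lbar0Poly <|
    isWeightedHomogeneous_lbar0Poly <| isWeightedHomogeneous_lbar0Poly <|
    isWeightedHomogeneous_l0Poly <| isWeightedHomogeneous_l0Poly h
  have hdeg : m + (-1, 1) + (-1, 1) + (1, -1) + (1, -1) + (1, -1) + (1, -1) = m + (2, -2) := by
    norm_num [add_assoc]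
  exact hdeg ▸ h'

lemma q0Poly_eq_zero {p q : ℕ} (h : IsWeightedHomogeneous bideg φ ((p : ℤ), (q : ℤ)))
    (hpq : p ≤ 1 ∨ q ≤ 1) : q0Poly φ = 0 := by
  have hbideg : ∀ i, 0 ≤ bideg i := by
    intro i; fin_cases i <;> simp [bideg, Prod.le_def]
  rcases hpq with hp | hq
  · have hL : l0Poly (l0Poly φ) = 0 :=
      (isWeightedHomogeneous_l0Poly (isWeightedHomogeneous_l0Poly h)).eq_zero_of_not_nonneg
        hbideg (by norm_num [Prod.le_def]; omega)
    rw [q0Poly, hL, Function.iterate_fixed lbar0Poly_zero]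
  · exact (isWeightedHomogeneous_q0Poly h).eq_zero_of_not_nonneg hbideg
      (by norm_num [Prod.le_def]; omega)

end Bidegree

lemma isBihom_zero (p q : ℕ) : IsBihom 0 p q := ⟨0, by simp⟩

lemma IsBihom.add {R S : ℂ × ℂ → ℂ} {p q : ℕ} (hR : IsBihom R p q) (hS : IsBihom S p q) :
    IsBihom (R + S) p q := by
  obtain ⟨c, hc⟩ := hR
  obtain ⟨c', hc'⟩ := hS
  exact ⟨c + c', fun z w => by simp [hc, hc', add_mul, Finset.sum_add_distrib]⟩

lemma isBihom_monomial (r : ℂ) {a b p q : ℕ} (ha : a ≤ p) (hb : b ≤ q) :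
    IsBihom (fun Z => r * Z.1 ^ a * Z.2 ^ (p - a) * starRingEnd ℂ Z.1 ^ b
      * starRingEnd ℂ Z.2 ^ (q - b)) p q := by
  refine ⟨Pi.single ⟨a, by omega⟩ (Pi.single ⟨b, by omega⟩ r), fun z w => ?_⟩
  simp [Pi.single_apply, ite_apply, ite_mul]

lemma isBihom_evalZZbar {φ : MvPolynomial (Fin 4) ℂ} {p q : ℕ}
    (h : IsWeightedHomogeneous bideg φ ((p : ℤ), (q : ℤ))) : IsBihom (evalZZbar φ) p q := by
  induction h using IsWeightedHomogeneous.induction_on with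
  | zero => simpa using isBihom_zero p q
  | add φ ψ _ _ hφ hψ => simpa using hφ.add hψ
  | monomial d r hd =>
    simp only [bideg, Finsupp.weight_eq_sum, nsmul_eq_mul, Fin.sum_univ_four, Fin.isValue,
      cons_val_zero, cons_val_one, cons_val, Prod.ext_iff, Prod.fst_add, Prod.fst_mul,
      Prod.fst_natCast, mul_one, mul_zero, add_zero, Prod.snd_add, Prod.snd_mul, Prod.snd_natCast,
      zero_add] at hd
    have hφ : evalZZbar (monomial d r) = fun Z => r * Z.1 ^ d 0 * Z.2 ^ (p - d 0)
        * starRingEnd ℂ Z.1 ^ d 2 * starRingEnd ℂ Z.2 ^ (q - d 2) := by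
      rw [show p - d 0 = d 1 by omega, show q - d 2 = d 3 by omega]
      ext Z
      simp [evalZZbar, aeval_monomial, Finsupp.prod_fintype, Fin.prod_univ_four, zzbarCoord,
        mul_assoc]
    exact hφ ▸ isBihom_monomial r (by omega) (by omega)

lemma IsBihom.exists_evalZZbar {R : ℂ × ℂ → ℂ} {p q : ℕ} (h : IsBihom R p q) :
    ∃ φ, IsWeightedHomogeneous bideg φ ((p : ℤ), (q : ℤ)) ∧ evalZZbar φ = R := by
  obtain ⟨c, hc⟩ := h
  refine ⟨∑ a : Fin (p + 1), ∑ b : Fin (q + 1), C (c a b) * X 0 ^ (a : ℕ) * X 1 ^ (p - a)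
      * X 2 ^ (b : ℕ) * X 3 ^ (q - b), ?_, ?_⟩
  · refine IsWeightedHomogeneous.sum _ _ _ fun a _ => IsWeightedHomogeneous.sum _ _ _ fun b _ => ?_
    have hX (i : Fin 4) (n : ℕ) := (isWeightedHomogeneous_X ℂ bideg i).pow n
    convert ((((isWeightedHomogeneous_C bideg (c a b)).mul (hX 0 a)).mul (hX 1 (p - a))).mul
      (hX 2 b)).mul (hX 3 (q - b)) using 1
    have := a.is_le
    have := b.is_le
    ext <;> simp only [bideg, Fin.isValue, cons_val_zero, cons_val_one, cons_val, Prod.smul_mk,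
      Prod.mk_add_mk, Int.nsmul_eq_mul, mul_one, nsmul_zero, zero_add, add_zero] <;> omega
  · ext ⟨z, w⟩
    simp [hc, evalZZbar, zzbarCoord]

/-- If `R` is homogeneous of bidegree `(p, q)`, then `Q⁰(R)` is homogeneous of bidegree
`(p+2, q-2)`, and `Q⁰(R) = 0` whenever `p ≤ 1` or `q ≤ 1`. -/
theorem Q0_of_bihom (R : ℂ × ℂ → ℂ) (p q : ℕ) (h : IsBihom R p q) :
    IsBihom (Q0 R) (p + 2) (q - 2) ∧ ((p ≤ 1 ∨ q ≤ 1) → ∀ Z, Q0 R Z = 0) := by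
  obtain ⟨φ, hφ, rfl⟩ := h.exists_evalZZbar
  rw [Q0_evalZZbar]
  refine ⟨?_, fun hpq Z => by simp [q0Poly_eq_zero hφ hpq]⟩
  rcases le_or_gt 2 q with hq | hq
  · apply isBihom_evalZZbar
    convert isWeightedHomogeneous_q0Poly hφ using 1
    simp only [Prod.ext_iff, Prod.fst_add, Prod.snd_add]
    omega
  · simpa [q0Poly_eq_zero hφ (Or.inr (by omega))] using isBihom_zero (p + 2) (q - 2)
end
end

section
/- For every integer p ≥ 2, Q⁰(z^p w̄^p) = (p+2)(p+1)p²(p−1)² · z^{p+2} w̄^{p−2}, and likewise Q⁰(w^p z̄^p) = (p+2)(p+1)p²(p−1)² · w^{p+2} z̄^{p−2}. -/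
/-!
The real derivative of a monomial `C z^a w^b z̄^c w̄^d` is read off coordinatewise, so each
Wirtinger derivative just lowers one exponent and multiplies by it. For `R = z^p w̄^p` only
`R_zz` survives, giving `p(p-1) z^{p-2} w̄^{p+2}` inside `L̄₀⁴`; on functions free of `z̄`,
`L̄₀` reduces to `z ∂_w̄`, and four applications produce `(p+2)(p+1)p(p-1) z^{p+2} w̄^{p-2}`.
For `R = w^p z̄^p` the computation is mirrored: `L̄₀` reduces to `-w ∂_z̄` and the four signs
cancel.
-/

noncomputable section

open Complex Matrix Set

open ComplexConjugate

def monomialTerm (C : ℂ) (a b c d : ℕ) (Z : ℂ × ℂ) : ℂ :=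
  C * Z.1 ^ a * Z.2 ^ b * conj Z.1 ^ c * conj Z.2 ^ d

lemma fderiv_monomialTerm_apply (C : ℂ) (a b c d : ℕ) (P h : ℂ × ℂ) :
    fderiv ℝ (monomialTerm C a b c d) P h =
      monomialTerm (C * a) (a - 1) b c d P * h.1 + monomialTerm (C * b) a (b - 1) c d P * h.2
        + monomialTerm (C * c) a b (c - 1) d P * conj h.1
        + monomialTerm (C * d) a b c (d - 1) P * conj h.2 := by
  have hz : HasFDerivAt (fun Z : ℂ × ℂ => Z.1) (ContinuousLinearMap.fst ℝ ℂ ℂ) P :=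
    hasFDerivAt_fst
  have hw : HasFDerivAt (fun Z : ℂ × ℂ => Z.2) (ContinuousLinearMap.snd ℝ ℂ ℂ) P :=
    hasFDerivAt_snd
  have hzb := conjCLE.hasFDerivAt.comp P hz
  have hwb := conjCLE.hasFDerivAt.comp P hw
  have hM : HasFDerivAt (monomialTerm C a b c d) _ P :=
    ((((hasFDerivAt_const C P).mul (hz.pow a)).mul (hw.pow b)).mul (hzb.pow c)).mul (hwb.pow d)
  rw [hM.fderiv]
  simp only [monomialTerm, ContinuousAlgEquiv.coe_coeCLE, Function.comp_apply, conjCAE_apply,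
    Pi.mul_apply, nsmul_eq_mul, smul_add, _root_.add_apply, _root_.smul_apply,
    ContinuousLinearMap.comp_apply, ContinuousLinearMap.coe_fst', ContinuousLinearMap.coe_snd',
    ContinuousLinearEquiv.coe_coe, ContinuousAlgEquiv.coeCLE_apply, smul_eq_mul,
    _root_.zero_apply, mul_zero, add_zero]
  ring

lemma wirtinger_eq_of_fderiv_apply {f : ℂ × ℂ → ℂ} {P : ℂ × ℂ} {α β γ δ : ℂ}
    (hf : ∀ h, fderiv ℝ f P h = α * h.1 + β * h.2 + γ * conj h.1 + δ * conj h.2) :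
    wdz f P = α ∧ wdw f P = β ∧ wdzb f P = γ ∧ wdwb f P = δ := by
  simp only [wdz, wdw, wdzb, wdwb, hf, map_one, map_zero, conj_I]
  refine ⟨?_, ?_, ?_, ?_⟩ <;> ring_nf <;> simp only [I_sq] <;> ring

lemma wirtinger_monomialTerm (C : ℂ) (a b c d : ℕ) (P : ℂ × ℂ) :
    wdz (monomialTerm C a b c d) P = monomialTerm (C * a) (a - 1) b c d P ∧
      wdw (monomialTerm C a b c d) P = monomialTerm (C * b) a (b - 1) c d P ∧
      wdzb (monomialTerm C a b c d) P = monomialTerm (C * c) a b (c - 1) d P ∧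
      wdwb (monomialTerm C a b c d) P = monomialTerm (C * d) a b c (d - 1) P :=
  wirtinger_eq_of_fderiv_apply (fderiv_monomialTerm_apply C a b c d P)

lemma wdz_monomialTerm (C : ℂ) (a b c d : ℕ) :
    wdz (monomialTerm C a b c d) = monomialTerm (C * a) (a - 1) b c d :=
  funext fun P => (wirtinger_monomialTerm C a b c d P).1

lemma wdw_monomialTerm (C : ℂ) (a b c d : ℕ) :
    wdw (monomialTerm C a b c d) = monomialTerm (C * b) a (b - 1) c d :=
  funext fun P => (wirtinger_monomialTerm C a b c d P).2.1

lemma wdzb_monomialTerm (C : ℂ) (a b c d : ℕ) :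
    wdzb (monomialTerm C a b c d) = monomialTerm (C * c) a b (c - 1) d :=
  funext fun P => (wirtinger_monomialTerm C a b c d P).2.2.1

lemma wdwb_monomialTerm (C : ℂ) (a b c d : ℕ) :
    wdwb (monomialTerm C a b c d) = monomialTerm (C * d) a b c (d - 1) :=
  funext fun P => (wirtinger_monomialTerm C a b c d P).2.2.2

lemma Lbar0_monomialTerm_of_zbar_free (C : ℂ) (a b d : ℕ) :
    Lbar0 (monomialTerm C a b 0 d) = monomialTerm (C * d) (a + 1) b 0 (d - 1) := by
  funext P
  simp only [Lbar0, wdzb_monomialTerm, wdwb_monomialTerm, monomialTerm]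
  ring

lemma Lbar0_monomialTerm_of_wbar_free (C : ℂ) (a b c : ℕ) :
    Lbar0 (monomialTerm C a b c 0) = monomialTerm (-(C * c)) a (b + 1) (c - 1) 0 := by
  funext P
  simp only [Lbar0, wdzb_monomialTerm, wdwb_monomialTerm, monomialTerm]
  ring

lemma Lbar0_iterate_monomialTerm_of_zbar_free (C : ℂ) (a b d n : ℕ) :
    Lbar0^[n] (monomialTerm C a b 0 d) =
      monomialTerm (C * d.descFactorial n) (a + n) b 0 (d - n) := by
  induction n with
  | zero => simp
  | succ n ih =>
    rw [Function.iterate_succ_apply', ih, Lbar0_monomialTerm_of_zbar_free, Nat.descFactorial_succ,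
      Nat.sub_sub, ← add_assoc]
    push_cast
    ring_nf

lemma Lbar0_iterate_monomialTerm_of_wbar_free (C : ℂ) (a b c n : ℕ) :
    Lbar0^[n] (monomialTerm C a b c 0) =
      monomialTerm ((-1) ^ n * C * c.descFactorial n) a (b + n) (c - n) 0 := by
  induction n with
  | zero => simp
  | succ n ih =>
    rw [Function.iterate_succ_apply', ih, Lbar0_monomialTerm_of_wbar_free, Nat.descFactorial_succ,
      Nat.sub_sub, ← add_assoc]
    push_cast
    ring_nf

/-- `R_{Z²}(L₀, L₀)` for the tangential field `L₀ = -w̄ ∂_z + z̄ ∂_w` of the sphere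
`ρ = |z|² + |w|² - 1`. -/
def hessL0 (R : ℂ × ℂ → ℂ) (P : ℂ × ℂ) : ℂ :=
  conj P.2 ^ 2 * wdz (wdz R) P - 2 * conj P.1 * conj P.2 * wdw (wdz R) P
    + conj P.1 ^ 2 * wdw (wdw R) P

lemma Q0_eq_Lbar0_iterate_hessL0 (R : ℂ × ℂ → ℂ) : Q0 R = Lbar0^[4] (hessL0 R) := rfl

lemma hessL0_monomialTerm_z_wbar (C : ℂ) (a d : ℕ) :
    hessL0 (monomialTerm C (a + 2) 0 0 d) = monomialTerm (C * (a + 2) * (a + 1)) a 0 0 (d + 2) := by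
  funext P
  simp only [hessL0, wdz_monomialTerm, wdw_monomialTerm, monomialTerm]
  push_cast
  ring

lemma hessL0_monomialTerm_w_zbar (C : ℂ) (b c : ℕ) :
    hessL0 (monomialTerm C 0 (b + 2) c 0) = monomialTerm (C * (b + 2) * (b + 1)) 0 b (c + 2) 0 := by
  funext P
  simp only [hessL0, wdz_monomialTerm, wdw_monomialTerm, monomialTerm]
  push_cast
  ring

lemma Q0_monomialTerm_z_wbar (C : ℂ) (a d : ℕ) :
    Q0 (monomialTerm C (a + 2) 0 0 d) =
      monomialTerm (C * (a + 2) * (a + 1) * (d + 2).descFactorial 4) (a + 4) 0 0 (d - 2) := by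
  rw [Q0_eq_Lbar0_iterate_hessL0, hessL0_monomialTerm_z_wbar,
    Lbar0_iterate_monomialTerm_of_zbar_free]
  rfl

lemma Q0_monomialTerm_w_zbar (C : ℂ) (b c : ℕ) :
    Q0 (monomialTerm C 0 (b + 2) c 0) =
      monomialTerm (C * (b + 2) * (b + 1) * (c + 2).descFactorial 4) 0 (b + 4) (c - 2) 0 := by
  rw [Q0_eq_Lbar0_iterate_hessL0, hessL0_monomialTerm_w_zbar,
    Lbar0_iterate_monomialTerm_of_wbar_free, show (-1 : ℂ) ^ 4 = 1 by norm_num, one_mul]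
  rfl

/-- **Computation of `Q⁰` on the basic almost circular monomials** (Section 5.2): for `p ≥ 2`,
`Q⁰(z^p w̄^p) = (p+2)(p+1)p²(p-1)² z^{p+2} w̄^{p-2}` and
`Q⁰(w^p z̄^p) = (p+2)(p+1)p²(p-1)² w^{p+2} z̄^{p-2}`. -/
theorem Q0_monomials (p : ℕ) (hp : 2 ≤ p) (z w : ℂ) :
    Q0 (fun Z => Z.1 ^ p * (starRingEnd ℂ Z.2) ^ p) (z, w) =
        (((p + 2) * (p + 1) * p ^ 2 * (p - 1) ^ 2 : ℕ) : ℂ) *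
          z ^ (p + 2) * (starRingEnd ℂ w) ^ (p - 2) ∧
      Q0 (fun Z => Z.2 ^ p * (starRingEnd ℂ Z.1) ^ p) (z, w) =
        (((p + 2) * (p + 1) * p ^ 2 * (p - 1) ^ 2 : ℕ) : ℂ) *
          w ^ (p + 2) * (starRingEnd ℂ z) ^ (p - 2) := by
  obtain ⟨q, rfl⟩ : ∃ q, p = q + 2 := ⟨p - 2, by omega⟩
  have hz_wbar : (fun Z : ℂ × ℂ => Z.1 ^ (q + 2) * conj Z.2 ^ (q + 2)) =
      monomialTerm 1 (q + 2) 0 0 (q + 2) := by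
    funext Z; simp [monomialTerm]
  have hw_zbar : (fun Z : ℂ × ℂ => Z.2 ^ (q + 2) * conj Z.1 ^ (q + 2)) =
      monomialTerm 1 0 (q + 2) (q + 2) 0 := by
    funext Z; simp [monomialTerm]
  rw [hz_wbar, hw_zbar, Q0_monomialTerm_z_wbar, Q0_monomialTerm_w_zbar]
  refine ⟨?_, ?_⟩ <;>
  · simp only [monomialTerm, Nat.descFactorial_succ, Nat.descFactorial_zero,
      show q + 2 - 1 = q + 1 by omega, show q + 2 + 2 - 3 = q + 1 by omega]
    push_cast
    ring
end
end

section
/- Let S³ := {(z,w) ∈ ℂ² : |z|² + |w|² = 1} and let V ⊂ S³ be a subset whose Hausdorff dimension is strictly less than 2 (in the paper, V is the zero set on S³ of a real polynomial, assumed to have no points of dimension ≥ 2 as a real-analytic variety). Then there exists Z₀ ∈ S³ such that the whole circle {e^{it}Z₀ : t ∈ ℝ} is disjoint from V, i.e. e^{it}Z₀ ∉ V for all t ∈ ℝ. -/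
/-!
The map `ψ (z, w) = z * conj w` (the `ℂ`-component of the Hopf fibration) is constant on every
circle `t ↦ e^{it} Z` and sends the sphere `S³` onto the closed disc of radius `1/2`. Since `ψ` is
smooth, `ψ '' V` has Hausdorff dimension `< 2`, so it misses a point `u` of the open disc; the circle
through any `Z₀ ∈ S³` with `ψ Z₀ = u` then avoids `V`.
-/

open Complex
open scoped ComplexConjugate

def hopfMap (Z : ℂ × ℂ) : ℂ := Z.1 * conj Z.2

theorem contDiff_hopfMap {n : WithTop ℕ∞} : ContDiff ℝ n hopfMap :=
  contDiff_fst.mul (conjCLE.contDiff.comp contDiff_snd)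

theorem hopfMap_mul_of_norm_eq_one {c : ℂ} (hc : ‖c‖ = 1) (Z : ℂ × ℂ) :
    hopfMap (c * Z.1, c * Z.2) = hopfMap Z := by
  calc hopfMap (c * Z.1, c * Z.2) = c * conj c * hopfMap Z := by
        simp only [hopfMap, map_mul]; ring
    _ = hopfMap Z := by rw [mul_conj', hc, ofReal_one, one_pow, one_mul]

theorem exists_pos_sq_add_div_sq_eq_one {m : ℝ} (hm : 0 ≤ m) (hm' : m ≤ 1 / 2) :
    ∃ x : ℝ, 0 < x ∧ x ^ 2 + (m / x) ^ 2 = 1 := by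
  -- `x ^ 2` is the larger root `a` of `a * (1 - a) = m ^ 2`
  set s := √(1 - 4 * m ^ 2)
  have hs : s ^ 2 = 1 - 4 * m ^ 2 := Real.sq_sqrt (by nlinarith)
  have hs_pos : 0 < 1 + s := by positivity
  refine ⟨√((1 + s) / 2), by positivity, ?_⟩
  rw [div_pow, Real.sq_sqrt (by positivity)]
  field_simp
  linear_combination hs

theorem exists_hopfMap_eq {u : ℂ} (hu : ‖u‖ ≤ 1 / 2) :
    ∃ Z : ℂ × ℂ, ‖Z.1‖ ^ 2 + ‖Z.2‖ ^ 2 = 1 ∧ hopfMap Z = u := by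
  obtain ⟨x, hx, hxu⟩ := exists_pos_sq_add_div_sq_eq_one (norm_nonneg u) hu
  have hx' : (x : ℂ) ≠ 0 := ofReal_ne_zero.2 hx.ne'
  refine ⟨(x, conj u / x), ?_, ?_⟩
  · simpa [norm_div, abs_of_pos hx] using hxu
  · simp only [hopfMap, map_div₀, conj_conj, conj_ofReal]
    field_simp

theorem dense_compl_hopfMap_image {V : Set (ℂ × ℂ)} (hV : dimH V < 2) :
    Dense (hopfMap '' V)ᶜ :=
  contDiff_hopfMap.contDiffOn.dense_compl_image_of_dimH_lt_finrank convex_univ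
    (Set.subset_univ V) (by rwa [finrank_real_complex])

theorem exists_circle_avoiding_general (V : Set (ℂ × ℂ))
    (hdim : dimH V < 2) :
    ∃ Z₀ : ℂ × ℂ, ‖Z₀.1‖ ^ 2 + ‖Z₀.2‖ ^ 2 = 1 ∧
      ∀ t : ℝ, (Complex.exp (Complex.I * (t : ℂ)) * Z₀.1,
        Complex.exp (Complex.I * (t : ℂ)) * Z₀.2) ∉ V := by
  obtain ⟨u, hu_notMem, hu⟩ := (dense_compl_hopfMap_image hdim).exists_mem_open
    Metric.isOpen_ball (Metric.nonempty_ball.2 (by norm_num : (0 : ℝ) < 1 / 2))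
  obtain ⟨Z₀, hZ₀, rfl⟩ := exists_hopfMap_eq (mem_ball_zero_iff.1 hu).le
  refine ⟨Z₀, hZ₀, fun t hmem => hu_notMem ⟨_, hmem, ?_⟩⟩
  rw [mul_comm I]
  exact hopfMap_mul_of_norm_eq_one (norm_exp_ofReal_mul_I t) Z₀

/-- **Lemma 6.7 (existence of a circle avoiding the umbilical variety)**: if `V` is a subset
of the unit sphere `S³ ⊂ ℂ²` of Hausdorff dimension strictly less than `2`, then some great
circle `t ↦ e^{it} Z₀` (with `Z₀ ∈ S³`) is entirely disjoint from `V`. -/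
theorem exists_circle_avoiding (V : Set (ℂ × ℂ))
    (hV : V ⊆ {Z : ℂ × ℂ | ‖Z.1‖ ^ 2 + ‖Z.2‖ ^ 2 = 1})
    (hdim : dimH V < 2) :
    ∃ Z₀ : ℂ × ℂ, ‖Z₀.1‖ ^ 2 + ‖Z₀.2‖ ^ 2 = 1 ∧
      ∀ t : ℝ, (Complex.exp (Complex.I * (t : ℂ)) * Z₀.1,
        Complex.exp (Complex.I * (t : ℂ)) * Z₀.2) ∉ V :=
  exists_circle_avoiding_general V hdim
end
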